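/- arXiv:1308.2658 — 9 statements merged into one kernel-verified Lean document; each statement's English description precedes it below -/
import Mathlib

section
/- If p₁ = x + y I₁, p₂ = x + y I₂, p₃ = x + y I₃ are three quaternions on the same 2-sphere (x, y ∈ ℝ, I₁, I₂, I₃ distinct imaginary units with I² = -1) with I₁ ≠ I₂, then for every natural number n, conj(p₃)ⁿ = conj(p₁)ⁿ (I₁ - I₂)⁻¹ (I₃ - I₂) + conj(p₂)ⁿ (I₁ - I₂)⁻¹ (I₁ - I₃). -/
/-!
For fixed real `x, y`, the function `I ↦ conj(x + y I)ⁿ` on imaginary units has the form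
`I ↦ a + b I` with real `a, b` independent of `I`, since `z ↦ re z + im z • I` is an algebra
embedding of `ℂ` into `ℍ`. So the identity only has to be checked for `I ↦ 1` and `I ↦ I`; the
latter reduces to `I₁ (I₁ - I₂)⁻¹ = -(I₁ - I₂)⁻¹ I₂`, a consequence of
`(I₁ - I₂) I₁ = -I₂ (I₁ - I₂)`.
-/

open Quaternion

theorem semiconjBy_sub_of_sq_eq_neg_one {R : Type*} [Ring R] {u v : R}
    (hu : u ^ 2 = -1) (hv : v ^ 2 = -1) : SemiconjBy (u - v) u (-v) := by
  rw [sq] at hu hv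
  simp only [SemiconjBy, sub_mul, mul_sub, hu, hv, neg_mul]
  abel

section DivisionRing

variable {D : Type*} [DivisionRing D] {u v : D}

theorem mul_inv_sub_of_sq_eq_neg_one (hu : u ^ 2 = -1) (hv : v ^ 2 = -1) :
    u * (u - v)⁻¹ = (u - v)⁻¹ * -v :=
  ((semiconjBy_sub_of_sq_eq_neg_one hu hv).inv_symm_left₀).eq.symm

theorem inv_sub_mul_add_inv_sub_mul (huv : u ≠ v) (w : D) :
    (u - v)⁻¹ * (w - v) + (u - v)⁻¹ * (u - w) = 1 := by
  rw [← mul_add, sub_add_sub_comm, add_comm w, add_sub_add_right_eq_sub,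
    inv_mul_cancel₀ (sub_ne_zero.mpr huv)]

theorem mul_inv_sub_mul_add_mul_inv_sub_mul (hu : u ^ 2 = -1) (hv : v ^ 2 = -1) (huv : u ≠ v)
    (w : D) : u * (u - v)⁻¹ * (w - v) + v * (u - v)⁻¹ * (u - w) = w := by
  have hvu : v * (u - v)⁻¹ = (u - v)⁻¹ * -u := by
    rw [← neg_sub v u, inv_neg, mul_neg, neg_mul, mul_inv_sub_of_sq_eq_neg_one hv hu]
  rw [mul_inv_sub_of_sq_eq_neg_one hu hv, hvu, mul_assoc, mul_assoc, ← mul_add]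
  have hsum : -v * (w - v) + -u * (u - w) = (u - v) * w := by
    rw [sq] at hu hv
    simp only [mul_sub, sub_mul, neg_mul, hu, hv]
    abel
  rw [hsum, ← mul_assoc, inv_mul_cancel₀ (sub_ne_zero.mpr huv), one_mul]

variable [Algebra ℝ D]

theorem algebraMap_add_smul_representation (hu : u ^ 2 = -1) (hv : v ^ 2 = -1) (huv : u ≠ v)
    (a b : ℝ) (w : D) :
    algebraMap ℝ D a + b • w
      = (algebraMap ℝ D a + b • u) * (u - v)⁻¹ * (w - v)
        + (algebraMap ℝ D a + b • v) * (u - v)⁻¹ * (u - w) := by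
  rw [Algebra.algebraMap_eq_smul_one]
  simp only [add_mul, smul_mul_assoc, one_mul]
  rw [add_add_add_comm, ← smul_add, ← smul_add, inv_sub_mul_add_inv_sub_mul huv,
    mul_inv_sub_mul_add_mul_inv_sub_mul hu hv huv]

end DivisionRing

theorem Quaternion.star_eq_neg_of_sq_eq_neg_one {R : Type*} [CommRing R] [LinearOrder R]
    [IsStrictOrderedRing R] {I : ℍ[R]} (hI : I ^ 2 = -1) : star I = -I := by
  have hnorm : normSq I = 1 := by
    refine (pow_eq_one_iff_of_nonneg normSq_nonneg two_ne_zero).1 ?_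
    rw [← map_pow, hI, normSq_neg, map_one]
  calc star I = -(I * I) * star I := by rw [← sq, hI, neg_neg, one_mul]
    _ = -(I * (I * star I)) := by rw [neg_mul, mul_assoc]
    _ = -I := by rw [self_mul_star, hnorm, coe_one, mul_one]

theorem Quaternion.star_coe_add_coe_mul_pow_eq_liftAux {I : ℍ[ℝ]} (hI : I ^ 2 = -1) (x y : ℝ)
    (n : ℕ) : star ((x : ℍ[ℝ]) + (y : ℍ[ℝ]) * I) ^ n
      = Complex.liftAux I ((sq I).symm.trans hI) (starRingEnd ℂ ⟨x, y⟩ ^ n) := by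
  rw [map_pow, Complex.liftAux_apply]
  congr 1
  simp [star_eq_neg_of_sq_eq_neg_one hI, mul_coe_eq_smul]

theorem sphere_kernel_identity_general (x y : ℝ) (I₁ I₂ I₃ : ℍ[ℝ])
    (h1 : I₁ ^ 2 = -1) (h2 : I₂ ^ 2 = -1) (h3 : I₃ ^ 2 = -1)
    (h12 : I₁ ≠ I₂)
    (p₁ p₂ p₃ : ℍ[ℝ])
    (hp₁ : p₁ = (x : ℍ[ℝ]) + (y : ℍ[ℝ]) * I₁)
    (hp₂ : p₂ = (x : ℍ[ℝ]) + (y : ℍ[ℝ]) * I₂)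
    (hp₃ : p₃ = (x : ℍ[ℝ]) + (y : ℍ[ℝ]) * I₃) :
    ∀ n : ℕ, (star p₃) ^ n
      = (star p₁) ^ n * (I₁ - I₂)⁻¹ * (I₃ - I₂)
        + (star p₂) ^ n * (I₁ - I₂)⁻¹ * (I₁ - I₃) := by
  intro n
  subst hp₁ hp₂ hp₃
  simp only [star_coe_add_coe_mul_pow_eq_liftAux h1, star_coe_add_coe_mul_pow_eq_liftAux h2,
    star_coe_add_coe_mul_pow_eq_liftAux h3, Complex.liftAux_apply]
  exact algebraMap_add_smul_representation h1 h2 h12 _ _ I₃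

theorem sphere_kernel_identity (x y : ℝ) (I₁ I₂ I₃ : ℍ[ℝ])
    (h1 : I₁ ^ 2 = -1) (h2 : I₂ ^ 2 = -1) (h3 : I₃ ^ 2 = -1)
    (h12 : I₁ ≠ I₂) (h13 : I₁ ≠ I₃) (h23 : I₂ ≠ I₃)
    (p₁ p₂ p₃ : ℍ[ℝ])
    (hp₁ : p₁ = (x : ℍ[ℝ]) + (y : ℍ[ℝ]) * I₁)
    (hp₂ : p₂ = (x : ℍ[ℝ]) + (y : ℍ[ℝ]) * I₂)
    (hp₃ : p₃ = (x : ℍ[ℝ]) + (y : ℍ[ℝ]) * I₃) :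
    ∀ n : ℕ, (star p₃) ^ n
      = (star p₁) ^ n * (I₁ - I₂)⁻¹ * (I₃ - I₂)
        + (star p₂) ^ n * (I₁ - I₂)⁻¹ * (I₁ - I₃) :=
  sphere_kernel_identity_general x y I₁ I₂ I₃ h1 h2 h3 h12 p₁ p₂ p₃ hp₁ hp₂ hp₃
end

section
/- For quaternionic power series f(p) = Σₖ pᵏ fₖ and g(p) = Σₖ pᵏ gₖ absolutely convergent on the unit ball, and any p in the ball with g(p) ≠ 0, the slice product satisfies (g ⋆ f)(p) = g(p) · f(g(p)⁻¹ p g(p)). -/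
/-!
The double series `∑_{k,r} p^(k+r) g_r f_k` converges absolutely because the quaternion norm is
multiplicative. Grouped along the antidiagonals `k + r = n` it is the slice product at `p`.
Summed over `r` first it is `∑_k p^k g(p) f_k`; with `q = g(p)⁻¹ p g(p)` we have `p g(p) = g(p) q`,
so this is `g(p) ∑_k q^k f_k = g(p) f(q)`, and `‖q‖ = ‖p‖ < 1`.
-/

open Quaternion Finset

theorem HasSum.sum_antidiagonal {α A : Type*} [AddCommMonoid α] [TopologicalSpace α]
    [ContinuousAdd α] [T3Space α] [AddCommMonoid A] [HasAntidiagonal A]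
    {a : A × A → α} {s : α} (h : HasSum a s) :
    HasSum (fun n => ∑ kl ∈ antidiagonal n, a kl) s :=
  (HasAntidiagonal.sigmaAntidiagonalEquivProd.hasSum_iff.mpr h).sigma fun n => by
    rw [← sum_finset_coe]
    exact hasSum_fintype _

section NormedDivisionRing

variable {R : Type*} [NormedDivisionRing R]

theorem norm_inv_mul_mul_self (p : R) {u : R} (hu : u ≠ 0) : ‖u⁻¹ * p * u‖ = ‖p‖ := by
  rw [norm_mul, norm_mul, norm_inv]
  field_simp [norm_ne_zero_iff.mpr hu]

theorem pow_mul_eq_mul_inv_mul_mul_pow (p : R) {u : R} (hu : u ≠ 0) (k : ℕ) :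
    p ^ k * u = u * (u⁻¹ * p * u) ^ k := by
  have h : SemiconjBy u (u⁻¹ * p * u) p := by
    rw [SemiconjBy, mul_assoc, mul_inv_cancel_left₀ hu]
  exact (h.pow_right k).symm

theorem summable_norm_pow_add_mul_mul {f g : ℕ → R} {p : R}
    (hf : Summable fun k => ‖p ^ k * f k‖) (hg : Summable fun r => ‖p ^ r * g r‖) :
    Summable fun x : ℕ × ℕ => ‖p ^ (x.1 + x.2) * (g x.2 * f x.1)‖ :=
  (hf.mul_of_nonneg hg (fun _ => norm_nonneg _) fun _ => norm_nonneg _).congr fun x => by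
    simp only [norm_mul, norm_pow, pow_add]
    ring

theorem HasSum.pow_mul_sum_range_mul [CompleteSpace R] {f g : ℕ → R} {p u s : R}
    (hf : Summable fun k => ‖p ^ k * f k‖) (hg : Summable fun r => ‖p ^ r * g r‖)
    (hgu : HasSum (fun r => p ^ r * g r) u) (hs : HasSum (fun k => p ^ k * u * f k) s) :
    HasSum (fun n => p ^ n * ∑ r ∈ range (n + 1), g r * f (n - r)) s := by
  set a : ℕ × ℕ → R := fun x => p ^ (x.1 + x.2) * (g x.2 * f x.1) with ha_def
  have ha : Summable a := (summable_norm_pow_add_mul_mul hf hg).of_norm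
  have hfiber : ∀ k, HasSum (fun r => a (k, r)) (p ^ k * u * f k) := fun k =>
    ((hgu.mul_left (p ^ k)).mul_right (f k)).congr_fun fun r => by
      simp only [ha_def, pow_add, mul_assoc]
  have hsum : HasSum a s := (ha.hasSum.prod_fiberwise hfiber).unique hs ▸ ha.hasSum
  refine hsum.sum_antidiagonal.congr_fun fun n => ?_
  calc p ^ n * ∑ r ∈ range (n + 1), g r * f (n - r)
      = p ^ n * ∑ x ∈ antidiagonal n, g x.2 * f x.1 := by
        rw [← Nat.sum_antidiagonal_eq_sum_range_succ (fun r k => g r * f k),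
          ← Nat.sum_antidiagonal_swap]
        rfl
    _ = ∑ x ∈ antidiagonal n, a x := by
        rw [mul_sum]
        refine sum_congr rfl fun x hx => ?_
        rw [ha_def, ← mem_antidiagonal.mp hx]

end NormedDivisionRing

theorem star_product_pointwise (f g : ℕ → ℍ[ℝ]) (F G : ℍ[ℝ] → ℍ[ℝ])
    (hfabs : ∀ p : ℍ[ℝ], ‖p‖ < 1 → Summable fun k => ‖p ^ k * f k‖)
    (hgabs : ∀ p : ℍ[ℝ], ‖p‖ < 1 → Summable fun k => ‖p ^ k * g k‖)
    (hF : ∀ p : ℍ[ℝ], ‖p‖ < 1 → HasSum (fun k => p ^ k * f k) (F p))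
    (hG : ∀ p : ℍ[ℝ], ‖p‖ < 1 → HasSum (fun k => p ^ k * g k) (G p))
    (p : ℍ[ℝ]) (hp : ‖p‖ < 1) (hGp : G p ≠ 0) :
    HasSum (fun k => p ^ k * ∑ r ∈ Finset.range (k + 1), g r * f (k - r))
      (G p * F ((G p)⁻¹ * p * G p)) := by
  have hq : ‖(G p)⁻¹ * p * G p‖ < 1 := by rwa [norm_inv_mul_mul_self p hGp]
  refine (hG p hp).pow_mul_sum_range_mul (hfabs p hp) (hgabs p hp) ?_
  simpa only [pow_mul_eq_mul_inv_mul_mul_pow p hGp, mul_assoc] using (hF _ hq).mul_left (G p)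
end

section
/- Let p₁, ..., pₙ be distinct quaternions. The Vandermonde matrix V = [pᵢ^{j-1}]_{i,j=1}^{n} over ℍ has right-linearly independent rows if and only if no three of the points p₁, ..., pₙ are pairwise conjugate (i.e., no three lie on the same 2-sphere [p] = {h⁻¹ p h : h ≠ 0}). -/
/-!
Every quaternion `q` is a root of the real quadratic `x² = 2 Re q · x - |q|²`, and so is every
conjugate of `q`. Hence if three of the points are conjugate, the sums `∑ pᵢ^m αᵢ` over these
three points obey a two-term linear recurrence in `m`, and a nonzero `α` supported on them that
solves the equations for `m = 0, 1` solves all of them.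

Conversely, induct on `n`. If the last coefficient `c` of a solution `α` is nonzero, put
`d = c⁻¹ p_last c`; then `βᵢ = pᵢ αᵢ - αᵢ d` vanishes at the last index and solves the system
with one point and one equation fewer, so `β = 0`. Thus every `pᵢ` with `αᵢ ≠ 0` is conjugate
to `d`; as no three points are conjugate there are at most two of them, and the equations for
`m = 0, 1` together with `pᵢ ≠ pⱼ` force `α = 0`.
-/

open Quaternion Function

section GroupWithZero

variable {G : Type*} [GroupWithZero G]

theorem isConj_iff_exists_inv_mul_mul {a b : G} :
    IsConj a b ↔ ∃ h : G, h ≠ 0 ∧ b = h⁻¹ * a * h := by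
  rw [GroupWithZero.isConj_iff₀]
  constructor
  · rintro ⟨c, hc, rfl⟩
    exact ⟨c⁻¹, inv_ne_zero hc, by rw [inv_inv]⟩
  · rintro ⟨h, hh, rfl⟩
    exact ⟨h⁻¹, inv_ne_zero hh, by rw [inv_inv]⟩

def HasThreeConjugates {ι : Type*} (p : ι → G) : Prop :=
  ∃ i j k, i ≠ j ∧ j ≠ k ∧ i ≠ k ∧ IsConj (p i) (p j) ∧ IsConj (p i) (p k)

theorem HasThreeConjugates.of_comp {ι κ : Type*} {p : ι → G} {f : κ → ι} (hf : Injective f)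
    (h : HasThreeConjugates (p ∘ f)) : HasThreeConjugates p :=
  let ⟨i, j, k, hij, hjk, hik, hj, hk⟩ := h
  ⟨f i, f j, f k, hf.ne hij, hf.ne hjk, hf.ne hik, hj, hk⟩

end GroupWithZero

theorem IsConj.sq_eq_smul_sub_algebraMap {R A : Type*} [CommSemiring R] [Ring A] [Algebra R A]
    {a b : A} (hab : IsConj a b) {t s : R} (ha : a ^ 2 = t • a - algebraMap R A s) :
    b ^ 2 = t • b - algebraMap R A s := by
  obtain ⟨c, hc⟩ := hab
  have hc' : (c : A) * a = b * c := hc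
  apply (Units.mul_left_inj c).mp
  calc b ^ 2 * c = c * a ^ 2 := by rw [sq, sq, mul_assoc, ← hc', ← mul_assoc, ← hc', mul_assoc]
    _ = (t • b - algebraMap R A s) * c := by
      rw [ha, mul_sub, sub_mul, mul_smul_comm, hc', smul_mul_assoc, Algebra.commutes]

theorem Quaternion.sq_eq_smul_sub_algebraMap (q : ℍ[ℝ]) :
    q ^ 2 = (2 * q.re) • q - algebraMap ℝ ℍ[ℝ] (normSq q) := by
  have h : star q = ↑(2 * q.re) - q := eq_sub_of_add_eq' (self_add_star' q)
  rw [sq, Quaternion.algebraMap_def, ← self_mul_star, h, mul_sub, ← coe_commutes, coe_mul_eq_smul,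
    sub_sub_cancel]

section WeightedPowerSum

variable {ι R : Type*} [Fintype ι]

def weightedPowerSum [Semiring R] (p α : ι → R) (m : ℕ) : R := ∑ i, p i ^ m * α i

theorem weightedPowerSum_add [Semiring R] (p α β : ι → R) (m : ℕ) :
    weightedPowerSum p (α + β) m = weightedPowerSum p α m + weightedPowerSum p β m := by
  simp only [weightedPowerSum, Pi.add_apply, mul_add, Finset.sum_add_distrib]

theorem weightedPowerSum_single [Semiring R] [DecidableEq ι] (p : ι → R) (i : ι) (a : R)
    (m : ℕ) : weightedPowerSum p (Pi.single i a) m = p i ^ m * a := by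
  simp [weightedPowerSum, Pi.single_apply]

theorem weightedPowerSum_fin_succ [Semiring R] {n : ℕ} (p α : Fin (n + 1) → R) (m : ℕ) :
    weightedPowerSum p α m = weightedPowerSum (p ∘ Fin.castSucc) (α ∘ Fin.castSucc) m
      + p (Fin.last n) ^ m * α (Fin.last n) :=
  Fin.sum_univ_castSucc _

theorem weightedPowerSum_mul_sub_mul [Ring R] (p α : ι → R) (d : R) (m : ℕ) :
    weightedPowerSum p (fun i => p i * α i - α i * d) m
      = weightedPowerSum p α (m + 1) - weightedPowerSum p α m * d := by
  simp only [weightedPowerSum, mul_sub, Finset.sum_sub_distrib, Finset.sum_mul, pow_succ,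
    mul_assoc]

theorem weightedPowerSum_eq_zero_of_sq_eq {A : Type*} [CommSemiring R] [Ring A] [Algebra R A]
    {q α : ι → A} {t s : R} (hq : ∀ i, q i ^ 2 = t • q i - algebraMap R A s)
    (h0 : weightedPowerSum q α 0 = 0) (h1 : weightedPowerSum q α 1 = 0) (m : ℕ) :
    weightedPowerSum q α m = 0 := by
  have step : ∀ m, weightedPowerSum q α (m + 2)
      = t • weightedPowerSum q α (m + 1) - s • weightedPowerSum q α m := by
    intro m
    simp only [weightedPowerSum, Finset.smul_sum, ← Finset.sum_sub_distrib]
    refine Finset.sum_congr rfl fun i _ => ?_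
    rw [pow_add, hq, mul_sub, mul_smul_comm, ← pow_succ, ← Algebra.commutes, ← Algebra.smul_def,
      sub_mul, smul_mul_assoc, smul_mul_assoc]
  induction m using Nat.twoStepInduction with
  | zero => exact h0
  | one => exact h1
  | more m ih₀ ih₁ => rw [step, ih₀, ih₁, smul_zero, smul_zero, sub_zero]

end WeightedPowerSum

theorem exists_ne_zero_weightedPowerSum_eq_zero_of_isConj {ι R A : Type*} [Fintype ι]
    [DecidableEq ι] [CommSemiring R] [DivisionRing A] [Algebra R A] {p : ι → A} {i j k : ι}
    (hij : i ≠ j) (hik : i ≠ k) (hjk : p j ≠ p k) (hj : IsConj (p i) (p j))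
    (hk : IsConj (p i) (p k)) {t s : R} (hq : p i ^ 2 = t • p i - algebraMap R A s) :
    ∃ α : ι → A, α ≠ 0 ∧ ∀ m, weightedPowerSum p α m = 0 := by
  set B := -((p j - p k)⁻¹ * (p i - p k))
  set C := -(1 + B)
  refine ⟨Pi.single i 1 + Pi.single j B + Pi.single k C,
    Function.ne_iff.2 ⟨i, by simp [hij, hik]⟩, fun m => ?_⟩
  have hsupport : weightedPowerSum p (Pi.single i 1 + Pi.single j B + Pi.single k C) m
      = weightedPowerSum ![p i, p j, p k] ![1, B, C] m := by
    rw [weightedPowerSum_add, weightedPowerSum_add, weightedPowerSum_single,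
      weightedPowerSum_single, weightedPowerSum_single]
    simp [weightedPowerSum, Fin.sum_univ_three]
  rw [hsupport]
  refine weightedPowerSum_eq_zero_of_sq_eq (t := t) (s := s) (fun l => ?_) ?_ ?_ m
  · fin_cases l
    exacts [hq, hj.sq_eq_smul_sub_algebraMap hq, hk.sq_eq_smul_sub_algebraMap hq]
  · simp [weightedPowerSum, Fin.sum_univ_three, C]
  · have hB : (p j - p k) * B = -(p i - p k) := by
      rw [mul_neg, ← mul_assoc, mul_inv_cancel₀ (sub_ne_zero.2 hjk), one_mul]
    calc weightedPowerSum ![p i, p j, p k] ![1, B, C] 1 = p i * 1 + p j * B + p k * C := by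
          simp [weightedPowerSum, Fin.sum_univ_three]
      _ = (p i - p k) + (p j - p k) * B := by simp only [C]; noncomm_ring
      _ = 0 := by rw [hB, add_neg_cancel]

section DivisionRing

variable {D : Type*} [DivisionRing D]

theorem eq_zero_of_sum_eq_zero_of_semiconjBy {ι : Type*} [Fintype ι] {p α : ι → D} {d : D}
    (hp : Injective p) (h3 : ¬HasThreeConjugates p) (hd : ∀ i, SemiconjBy (α i) d (p i))
    (hsum : ∑ i, α i = 0) : α = 0 := by
  by_contra hα
  obtain ⟨a, ha⟩ := Function.ne_iff.1 hα
  have hconj : ∀ i, α i ≠ 0 → IsConj d (p i) := fun i hi => ⟨Units.mk0 _ hi, hd i⟩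
  obtain ⟨b, hba, hb⟩ : ∃ b, b ≠ a ∧ α b ≠ 0 := by
    by_contra! h
    exact ha (by rwa [Fintype.sum_eq_single a h] at hsum)
  have hrest : ∀ i, i ≠ a ∧ i ≠ b → α i = 0 := by
    rintro i ⟨hia, hib⟩
    by_contra hi
    exact h3 ⟨a, b, i, hba.symm, hib.symm, hia.symm, (hconj a ha).symm.trans (hconj b hb),
      (hconj a ha).symm.trans (hconj i hi)⟩
  have h0 : α a + α b = 0 := by rwa [Fintype.sum_eq_add a b hba.symm hrest] at hsum
  have h1 : p a * α a + p b * α b = 0 := by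
    have : ∑ i, p i * α i = 0 := by
      simp_rw [← (hd _).eq, ← Finset.sum_mul, hsum, zero_mul]
    rwa [Fintype.sum_eq_add a b hba.symm fun i hi => by rw [hrest i hi, mul_zero]] at this
  rw [eq_neg_of_add_eq_zero_right h0, mul_neg, ← sub_eq_add_neg, ← sub_mul] at h1
  rcases mul_eq_zero.1 h1 with h | h
  · exact hp.ne hba.symm (sub_eq_zero.1 h)
  · exact ha h

theorem eq_zero_of_weightedPowerSum_eq_zero : ∀ {n : ℕ} {p : Fin n → D}, Injective p →
    ¬HasThreeConjugates p → ∀ {α : Fin n → D}, (∀ j : Fin n, weightedPowerSum p α j = 0) → α = 0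
  | 0, _, _, _, α, _ => Subsingleton.elim α 0
  | n + 1, p, hp, h3, α, hα => by
    have of_last_eq_zero : ∀ β : Fin (n + 1) → D, β (Fin.last n) = 0 →
        (∀ m < n, weightedPowerSum p β m = 0) → β = 0 := by
      intro β hβ hrows
      have hinit : β ∘ Fin.castSucc = 0 :=
        eq_zero_of_weightedPowerSum_eq_zero (hp.comp (Fin.castSucc_injective n))
          (mt (HasThreeConjugates.of_comp (Fin.castSucc_injective n)) h3) fun j => by
            simpa [weightedPowerSum_fin_succ, hβ] using hrows j j.2
      funext i
      cases i using Fin.lastCases with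
      | last => exact hβ
      | cast i => exact congrFun hinit i
    by_cases hc : α (Fin.last n) = 0
    · exact of_last_eq_zero α hc fun m hm => hα ⟨m, by omega⟩
    set d := (α (Fin.last n))⁻¹ * p (Fin.last n) * α (Fin.last n)
    have hβ : (fun i => p i * α i - α i * d) = 0 := by
      refine of_last_eq_zero _ (by simp [d, mul_assoc, hc]) fun m hm => ?_
      rw [weightedPowerSum_mul_sub_mul, hα ⟨m + 1, by omega⟩, hα ⟨m, by omega⟩, zero_mul,
        sub_zero]
    exact eq_zero_of_sum_eq_zero_of_semiconjBy hp h3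
      (fun i => (sub_eq_zero.1 (congrFun hβ i)).symm) (by simpa [weightedPowerSum] using hα 0)

end DivisionRing

theorem vandermonde_right_independent_iff (n : ℕ) (p : Fin n → ℍ[ℝ])
    (hdist : Function.Injective p) :
    (∀ α : Fin n → ℍ[ℝ],
        (∀ j : Fin n, ∑ i : Fin n, p i ^ (j : ℕ) * α i = 0) → α = 0)
      ↔ ¬ ∃ i j k : Fin n, i ≠ j ∧ j ≠ k ∧ i ≠ k ∧
          (∃ h : ℍ[ℝ], h ≠ 0 ∧ p j = h⁻¹ * p i * h) ∧
          (∃ h : ℍ[ℝ], h ≠ 0 ∧ p k = h⁻¹ * p i * h) := by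
  simp only [← isConj_iff_exists_inv_mul_mul]
  change (∀ α, (∀ j : Fin n, weightedPowerSum p α j = 0) → α = 0) ↔ ¬HasThreeConjugates p
  refine ⟨fun hind ⟨i, j, k, hij, hjk, hik, hj, hk⟩ => ?_,
    fun h3 α hα => eq_zero_of_weightedPowerSum_eq_zero hdist h3 hα⟩
  obtain ⟨α, hα0, hα⟩ := exists_ne_zero_weightedPowerSum_eq_zero_of_isConj hij hik (hdist.ne hjk)
    hj hk (sq_eq_smul_sub_algebraMap (p i))
  exact hα0 (hind α fun j => hα j)
end

section
/- For quaternions p₁, ..., pₙ with |pᵢ| < 1 and arbitrary quaternions s₁, ..., sₙ, the series Pᵢⱼ = Σ_{k=0}^{∞} pᵢᵏ (1 - sᵢ conj(sⱼ)) conj(pⱼ)ᵏ converges absolutely for each i, j, and its diagonal entries satisfy Pᵢᵢ = (1 - |sᵢ|²)/(1 - |pᵢ|²). -/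
/-!
Since `‖·‖` is multiplicative on `ℍ`, the `k`-th term of `P i j` has norm
`‖1 - s i * star (s j)‖ * (‖p i‖ * ‖p j‖) ^ k`, a convergent geometric series. On the diagonal,
`1 - s * star s` is the real scalar `1 - ‖s‖ ^ 2`, which is central, and `p ^ k * star p ^ k` is
the real scalar `(‖p‖ ^ 2) ^ k`, so the series is a real geometric series embedded in `ℍ`.
-/

open Quaternion

theorem summable_norm_pow_mul_mul_pow {A : Type*} [NormedDivisionRing A] {a b : A}
    (hab : ‖a‖ * ‖b‖ < 1) (c : A) : Summable fun k : ℕ => ‖a ^ k * c * b ^ k‖ := by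
  have hgeo := (summable_geometric_of_lt_one (by positivity) hab).mul_left ‖c‖
  refine hgeo.congr fun k => ?_
  rw [norm_mul, norm_mul, norm_pow, norm_pow, mul_pow]
  ring

namespace Quaternion

theorem one_sub_self_mul_star (s : ℍ[ℝ]) : 1 - s * star s = ((1 - ‖s‖ ^ 2 : ℝ) : ℍ[ℝ]) := by
  rw [self_mul_star, normSq_eq_norm_mul_self]
  norm_cast
  congr 1
  ring

theorem pow_mul_coe_mul_star_pow (p : ℍ[ℝ]) (r : ℝ) (k : ℕ) :
    p ^ k * (r : ℍ[ℝ]) * star p ^ k = ((r * (‖p‖ ^ 2) ^ k : ℝ) : ℍ[ℝ]) := by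
  rw [← (coe_commute r (p ^ k)).eq, mul_assoc, ← star_pow, self_mul_star,
    normSq_eq_norm_mul_self, norm_pow]
  norm_cast
  congr 1
  ring

theorem hasSum_pow_mul_coe_mul_star_pow {p : ℍ[ℝ]} (hp : ‖p‖ < 1) (r : ℝ) :
    HasSum (fun k : ℕ => p ^ k * (r : ℍ[ℝ]) * star p ^ k) ((r / (1 - ‖p‖ ^ 2) : ℝ) : ℍ[ℝ]) := by
  have hp2 : ‖p‖ ^ 2 < 1 := by nlinarith [norm_nonneg p]
  simp only [pow_mul_coe_mul_star_pow, hasSum_coe, div_eq_mul_inv]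
  exact (hasSum_geometric_of_lt_one (sq_nonneg _) hp2).mul_left r

end Quaternion

theorem pick_matrix_entries (n : ℕ) (p s : Fin n → ℍ[ℝ])
    (hp : ∀ i, ‖p i‖ < 1) :
    (∀ i j : Fin n,
        Summable fun k : ℕ => ‖p i ^ k * (1 - s i * star (s j)) * star (p j) ^ k‖) ∧
      ∀ i : Fin n,
        HasSum (fun k : ℕ => p i ^ k * (1 - s i * star (s i)) * star (p i) ^ k)
          (((1 - ‖s i‖ ^ 2) / (1 - ‖p i‖ ^ 2) : ℝ) : ℍ[ℝ]) := by
  refine ⟨fun i j => summable_norm_pow_mul_mul_pow ?_ _, fun i => ?_⟩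
  · rw [norm_star]
    nlinarith [norm_nonneg (p i), norm_nonneg (p j), hp i, hp j]
  · rw [one_sub_self_mul_star]
    exact hasSum_pow_mul_coe_mul_star_pow (hp i) _
end

section
/- Let T be the n×n diagonal quaternionic matrix with entries p₁,...,pₙ (|pᵢ| < 1), E the column of ones, N the column with entries s₁,...,sₙ, and P the n×n quaternionic matrix with Pᵢⱼ = Σₖ pᵢᵏ (1 - sᵢ conj(sⱼ)) conj(pⱼ)ᵏ. Then P satisfies the Stein equation P - T P T* = E E* - N N*. -/
open Quaternion Matrix

/-- Multiplying `∑ aᵏ c bᵏ` by `a` on the left and `b` on the right drops its first term. -/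
theorem HasSum.mul_mul_eq_sub_of_pow_mul_pow {R : Type*} [Ring R] [TopologicalSpace R]
    [IsTopologicalRing R] [T2Space R] {a b c x : R}
    (h : HasSum (fun k : ℕ => a ^ k * c * b ^ k) x) : a * x * b = x - c := by
  have h_shift : HasSum (fun k : ℕ => a ^ (k + 1) * c * b ^ (k + 1)) (x - c) := by
    simpa using (hasSum_nat_add_iff' (f := fun k : ℕ => a ^ k * c * b ^ k) 1).2 h
  have h_conj : HasSum (fun k : ℕ => a * (a ^ k * c * b ^ k) * b) (a * x * b) :=
    (h.mul_left a).mul_right b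
  refine h_conj.unique ?_
  convert h_shift using 2 with k
  simp only [pow_succ' a, pow_succ b, mul_assoc]

theorem Matrix.diagonal_mul_mul_conjTranspose_diagonal_apply {n α : Type*} [Fintype n]
    [DecidableEq n] [Semiring α] [StarRing α] (d : n → α) (P : Matrix n n α) (i j : n) :
    (diagonal d * P * (diagonal d)ᴴ) i j = d i * P i j * star (d j) := by
  simp [diagonal_conjTranspose, mul_diagonal, diagonal_mul]

theorem Matrix.mul_conjTranspose_apply_of_unique {n m α : Type*} [Fintype m] [Unique m]
    [Semiring α] [StarRing α] (A : Matrix n m α) (i j : n) :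
    (A * Aᴴ) i j = A i default * star (A j default) := by
  simp [mul_apply]

theorem pick_matrix_stein_equation_general (n : ℕ) (p s : Fin n → ℍ[ℝ])
    (T : Matrix (Fin n) (Fin n) ℍ[ℝ]) (hT : T = Matrix.diagonal p)
    (E N : Matrix (Fin n) (Fin 1) ℍ[ℝ])
    (hE : E = fun _ _ => 1) (hN : N = fun i _ => s i)
    (P : Matrix (Fin n) (Fin n) ℍ[ℝ])
    (hP : ∀ i j : Fin n,
      HasSum (fun k : ℕ => p i ^ k * (1 - s i * star (s j)) * star (p j) ^ k) (P i j)) :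
    P - T * P * Tᴴ = E * Eᴴ - N * Nᴴ := by
  subst hT
  refine Matrix.ext fun i j => ?_
  rw [Matrix.sub_apply, Matrix.sub_apply, diagonal_mul_mul_conjTranspose_diagonal_apply,
    (hP i j).mul_mul_eq_sub_of_pow_mul_pow, mul_conjTranspose_apply_of_unique,
    mul_conjTranspose_apply_of_unique, hE, hN, star_one, mul_one, sub_sub_cancel]

theorem pick_matrix_stein_equation (n : ℕ) (p s : Fin n → ℍ[ℝ])
    (hp : ∀ i, ‖p i‖ < 1)
    (T : Matrix (Fin n) (Fin n) ℍ[ℝ]) (hT : T = Matrix.diagonal p)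
    (E N : Matrix (Fin n) (Fin 1) ℍ[ℝ])
    (hE : E = fun _ _ => 1) (hN : N = fun i _ => s i)
    (P : Matrix (Fin n) (Fin n) ℍ[ℝ])
    (hP : ∀ i j : Fin n,
      HasSum (fun k : ℕ => p i ^ k * (1 - s i * star (s j)) * star (p j) ^ k) (P i j)) :
    P - T * P * Tᴴ = E * Eᴴ - N * Nᴴ :=
  pick_matrix_stein_equation_general n p s T hT E N hE hN P hP
end

section
/- Let P be an invertible Hermitian n×n quaternionic matrix, K(p,q) a quaternion-valued kernel on Ω×Ω, and B : Ω → ℍ^{1×n}. If P is positive definite, then the block kernel [[P, B(q)*],[B(p), K(p,q)]] is a positive kernel on Ω×Ω if and only if the Schur-complement kernel K(p,q) - B(p) P⁻¹ B(q)* is a positive kernel on Ω×Ω. -/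
open Quaternion Matrix

/-- A quaternionic matrix-valued kernel on `Ω` is positive if all finite
quadratic forms it generates are nonnegative real numbers. -/
def QPosKernel {Ω : Type*} {m : Type*} [Fintype m]
    (K : Ω → Ω → Matrix m m ℍ[ℝ]) : Prop :=
  ∀ (r : ℕ) (q : Fin r → Ω) (c : Fin r → m → ℍ[ℝ]),
    ∃ t : ℝ, 0 ≤ t ∧
      ∑ i : Fin r, ∑ j : Fin r, ∑ a : m, ∑ b : m,
        star (c i a) * K (q i) (q j) a b * c j b = (t : ℍ[ℝ])

namespace BlockSchurAux

set_option linter.unusedSectionVars false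

lemma sum_mul_sum3 {R : Type*} [Ring R] {α β : Type*} (s : Finset α) (t : Finset β)
    (f : α → R) (x : R) (g : β → R) :
    (∑ i ∈ s, f i) * x * (∑ j ∈ t, g j) = ∑ i ∈ s, ∑ j ∈ t, f i * x * g j := by
  rw [Finset.sum_mul, Finset.sum_mul]
  exact Finset.sum_congr rfl fun i _ => Finset.mul_sum _ _ _

lemma sum3_comm {α β γ M : Type*} [AddCommMonoid M] (s : Finset α) (t : Finset β)
    (u : Finset γ) (f : α → β → γ → M) :
    ∑ k ∈ s, ∑ i ∈ t, ∑ j ∈ u, f k i j = ∑ i ∈ t, ∑ j ∈ u, ∑ k ∈ s, f k i j := by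
  rw [Finset.sum_comm]
  exact Finset.sum_congr rfl fun i _ => Finset.sum_comm

lemma sum4_comm {α β γ δ M : Type*} [AddCommMonoid M] (s : Finset α) (t : Finset β)
    (u : Finset γ) (v : Finset δ) (f : α → β → γ → δ → M) :
    ∑ i ∈ s, ∑ j ∈ t, ∑ a ∈ u, ∑ b ∈ v, f i j a b
      = ∑ a ∈ u, ∑ b ∈ v, ∑ i ∈ s, ∑ j ∈ t, f i j a b := by
  calc ∑ i ∈ s, ∑ j ∈ t, ∑ a ∈ u, ∑ b ∈ v, f i j a b
      = ∑ i ∈ s, ∑ a ∈ u, ∑ b ∈ v, ∑ j ∈ t, f i j a b := by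
        refine Finset.sum_congr rfl fun i _ => ?_
        rw [Finset.sum_comm]
        exact Finset.sum_congr rfl fun a _ => Finset.sum_comm
    _ = ∑ a ∈ u, ∑ b ∈ v, ∑ i ∈ s, ∑ j ∈ t, f i j a b := by
        rw [Finset.sum_comm]
        exact Finset.sum_congr rfl fun a _ => Finset.sum_comm

lemma collapse_right {n : ℕ} (P Q : Matrix (Fin n) (Fin n) ℍ[ℝ]) (hQ1 : P * Q = 1)
    (x Y : Fin n → ℍ[ℝ]) :
    ∑ k, ∑ l, x k * P k l * (∑ a, Q l a * Y a) = ∑ k, x k * Y k := by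
  refine Finset.sum_congr rfl fun k _ => ?_
  calc ∑ l, x k * P k l * (∑ a, Q l a * Y a)
      = ∑ l, ∑ a, x k * (P k l * Q l a * Y a) := by
        refine Finset.sum_congr rfl fun l _ => ?_
        rw [Finset.mul_sum]
        exact Finset.sum_congr rfl fun a _ => by simp [mul_assoc]
    _ = ∑ a, ∑ l, x k * (P k l * Q l a * Y a) := Finset.sum_comm
    _ = ∑ a, x k * ((P * Q) k a * Y a) := by
        refine Finset.sum_congr rfl fun a _ => ?_
        rw [Matrix.mul_apply, Finset.sum_mul, Finset.mul_sum]
    _ = x k * Y k := by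
        simp [hQ1, Matrix.one_apply]

lemma collapse_left {n : ℕ} (P Q : Matrix (Fin n) (Fin n) ℍ[ℝ]) (hQ2 : Q * P = 1)
    (Z y : Fin n → ℍ[ℝ]) :
    ∑ k, ∑ l, (∑ a, Z a * Q a k) * P k l * y l = ∑ l, Z l * y l := by
  rw [Finset.sum_comm]
  refine Finset.sum_congr rfl fun l _ => ?_
  calc ∑ k, (∑ a, Z a * Q a k) * P k l * y l
      = ∑ k, ∑ a, Z a * (Q a k * P k l * y l) := by
        refine Finset.sum_congr rfl fun k _ => ?_
        rw [Finset.sum_mul, Finset.sum_mul]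
        exact Finset.sum_congr rfl fun a _ => by simp [mul_assoc]
    _ = ∑ a, ∑ k, Z a * (Q a k * P k l * y l) := Finset.sum_comm
    _ = ∑ a, Z a * ((Q * P) a l * y l) := by
        refine Finset.sum_congr rfl fun a _ => ?_
        rw [Matrix.mul_apply, Finset.sum_mul, Finset.mul_sum]
    _ = Z l * y l := by
        simp [hQ2, Matrix.one_apply]

lemma key {n r : ℕ} (P Q : Matrix (Fin n) (Fin n) ℍ[ℝ])
    (hQ1 : P * Q = 1) (hQ2 : Q * P = 1)
    (hQs : ∀ a k : Fin n, star (Q k a) = Q a k)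
    (Kv : Fin r → Fin r → ℍ[ℝ]) (Bv : Fin r → Fin n → ℍ[ℝ])
    (c : Fin r → (Fin n ⊕ Fin 1) → ℍ[ℝ]) :
    (∑ i, ∑ j, ∑ a, ∑ b, star (c i a) *
        (Matrix.fromBlocks P (Matrix.of fun k (_ : Fin 1) => star (Bv j k))
          (Matrix.of fun (_ : Fin 1) k => Bv i k)
          (Matrix.of fun (_ : Fin 1) (_ : Fin 1) => Kv i j)) a b * c j b)
    = (∑ k, ∑ l,
          star ((∑ i, c i (Sum.inl k)) + ∑ a, Q k a * (∑ i, star (Bv i a) * c i (Sum.inr 0)))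
          * P k l *
          ((∑ i, c i (Sum.inl l)) + ∑ a, Q l a * (∑ i, star (Bv i a) * c i (Sum.inr 0))))
      + ∑ i, ∑ j, star (c i (Sum.inr 0)) *
          (Kv i j - ∑ a, ∑ b, Bv i a * Q a b * star (Bv j b)) * c j (Sum.inr 0) := by
  have expand : (∑ i, ∑ j, ∑ a, ∑ b, star (c i a) *
        (Matrix.fromBlocks P (Matrix.of fun k (_ : Fin 1) => star (Bv j k))
          (Matrix.of fun (_ : Fin 1) k => Bv i k)
          (Matrix.of fun (_ : Fin 1) (_ : Fin 1) => Kv i j)) a b * c j b)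
      = (∑ i, ∑ j, ∑ k, ∑ l, star (c i (Sum.inl k)) * P k l * c j (Sum.inl l))
      + (∑ i, ∑ j, ∑ k, star (c i (Sum.inl k)) * star (Bv j k) * c j (Sum.inr 0))
      + (∑ i, ∑ j, ∑ l, star (c i (Sum.inr 0)) * Bv i l * c j (Sum.inl l))
      + (∑ i, ∑ j, star (c i (Sum.inr 0)) * Kv i j * c j (Sum.inr 0)) := by
    simp only [Fintype.sum_sum_type, Fin.sum_univ_one, Matrix.fromBlocks_apply₁₁,
      Matrix.fromBlocks_apply₁₂, Matrix.fromBlocks_apply₂₁, Matrix.fromBlocks_apply₂₂,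
      Matrix.of_apply, Finset.sum_add_distrib]
    abel
  have M1 : (∑ i, ∑ j, ∑ k, ∑ l, star (c i (Sum.inl k)) * P k l * c j (Sum.inl l))
      = ∑ k, ∑ l, (∑ i, star (c i (Sum.inl k))) * P k l * (∑ j, c j (Sum.inl l)) := by
    rw [sum4_comm]
    exact Finset.sum_congr rfl fun k _ => Finset.sum_congr rfl fun l _ =>
      (sum_mul_sum3 _ _ _ _ _).symm
  have M2 : (∑ i, ∑ j, ∑ k, star (c i (Sum.inl k)) * star (Bv j k) * c j (Sum.inr 0))
      = ∑ k, (∑ i, star (c i (Sum.inl k))) * (∑ j, star (Bv j k) * c j (Sum.inr 0)) := by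
    rw [← sum3_comm]
    refine Finset.sum_congr rfl fun k _ => ?_
    rw [Finset.sum_mul_sum]
    exact Finset.sum_congr rfl fun i _ => Finset.sum_congr rfl fun j _ => by
      simp [mul_assoc]
  have M3 : (∑ i, ∑ j, ∑ l, star (c i (Sum.inr 0)) * Bv i l * c j (Sum.inl l))
      = ∑ l, (∑ i, star (c i (Sum.inr 0)) * Bv i l) * (∑ j, c j (Sum.inl l)) := by
    rw [← sum3_comm]
    refine Finset.sum_congr rfl fun l _ => ?_
    rw [Finset.sum_mul_sum]
  have M5 : (∑ i, ∑ j, star (c i (Sum.inr 0)) *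
        (∑ a, ∑ b, Bv i a * Q a b * star (Bv j b)) * c j (Sum.inr 0))
      = ∑ a, ∑ b, (∑ i, star (c i (Sum.inr 0)) * Bv i a) * Q a b *
          (∑ j, star (Bv j b) * c j (Sum.inr 0)) := by
    have h1 : ∀ i j : Fin r, star (c i (Sum.inr 0)) *
          (∑ a, ∑ b, Bv i a * Q a b * star (Bv j b)) * c j (Sum.inr 0)
        = ∑ a, ∑ b, star (c i (Sum.inr 0)) * (Bv i a * Q a b * star (Bv j b)) *
            c j (Sum.inr 0) := by
      intro i j
      rw [Finset.mul_sum, Finset.sum_mul]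
      refine Finset.sum_congr rfl fun a _ => ?_
      rw [Finset.mul_sum, Finset.sum_mul]
    simp only [h1]
    rw [sum4_comm]
    refine Finset.sum_congr rfl fun a _ => Finset.sum_congr rfl fun b _ => ?_
    rw [sum_mul_sum3]
    exact Finset.sum_congr rfl fun i _ => Finset.sum_congr rfl fun j _ => by
      simp [mul_assoc]
  have hstar : ∀ k, star ((∑ i, c i (Sum.inl k)) +
        ∑ a, Q k a * (∑ i, star (Bv i a) * c i (Sum.inr 0)))
      = (∑ i, star (c i (Sum.inl k))) +
        ∑ a, (∑ i, star (c i (Sum.inr 0)) * Bv i a) * Q a k := by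
    intro k
    simp [star_sum, StarMul.star_mul, hQs, Finset.sum_mul]
  have hW : (∑ k, ∑ l,
          star ((∑ i, c i (Sum.inl k)) + ∑ a, Q k a * (∑ i, star (Bv i a) * c i (Sum.inr 0)))
          * P k l *
          ((∑ i, c i (Sum.inl l)) + ∑ a, Q l a * (∑ i, star (Bv i a) * c i (Sum.inr 0))))
      = (∑ k, ∑ l, (∑ i, star (c i (Sum.inl k))) * P k l * (∑ j, c j (Sum.inl l)))
      + (∑ k, (∑ i, star (c i (Sum.inl k))) * (∑ j, star (Bv j k) * c j (Sum.inr 0)))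
      + (∑ l, (∑ i, star (c i (Sum.inr 0)) * Bv i l) * (∑ j, c j (Sum.inl l)))
      + (∑ a, ∑ b, (∑ i, star (c i (Sum.inr 0)) * Bv i a) * Q a b *
          (∑ j, star (Bv j b) * c j (Sum.inr 0))) := by
    simp only [hstar]
    simp only [add_mul, mul_add, Finset.sum_add_distrib]
    rw [collapse_right P Q hQ1 (fun k => ∑ i, star (c i (Sum.inl k)))
        (fun a => ∑ i, star (Bv i a) * c i (Sum.inr 0)),
      collapse_left P Q hQ2 (fun a => ∑ i, star (c i (Sum.inr 0)) * Bv i a)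
        (fun l => ∑ j, c j (Sum.inl l)),
      collapse_left P Q hQ2 (fun a => ∑ i, star (c i (Sum.inr 0)) * Bv i a)
        (fun l => ∑ a, Q l a * (∑ i, star (Bv i a) * c i (Sum.inr 0)))]
    have h4 : (∑ l, (∑ i, star (c i (Sum.inr 0)) * Bv i l) *
          (∑ a, Q l a * (∑ i, star (Bv i a) * c i (Sum.inr 0))))
        = ∑ a, ∑ b, (∑ i, star (c i (Sum.inr 0)) * Bv i a) * Q a b *
          (∑ j, star (Bv j b) * c j (Sum.inr 0)) := by
      refine Finset.sum_congr rfl fun l _ => ?_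
      rw [Finset.mul_sum]
      exact Finset.sum_congr rfl fun b _ => (mul_assoc _ _ _).symm
    rw [h4]
    abel
  have hS : (∑ i, ∑ j, star (c i (Sum.inr 0)) *
        (Kv i j - ∑ a, ∑ b, Bv i a * Q a b * star (Bv j b)) * c j (Sum.inr 0))
      = (∑ i, ∑ j, star (c i (Sum.inr 0)) * Kv i j * c j (Sum.inr 0))
      - (∑ a, ∑ b, (∑ i, star (c i (Sum.inr 0)) * Bv i a) * Q a b *
          (∑ j, star (Bv j b) * c j (Sum.inr 0))) := by
    simp only [mul_sub, sub_mul, Finset.sum_sub_distrib]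
    rw [M5]
  rw [expand, hW, hS, M1, M2, M3]
  abel

end BlockSchurAux

open BlockSchurAux in
theorem block_kernel_positive_iff_schur_complement {Ω : Type*} (n : ℕ)
    (P : Matrix (Fin n) (Fin n) ℍ[ℝ]) (hHerm : Pᴴ = P)
    (Q : Matrix (Fin n) (Fin n) ℍ[ℝ]) (hQ1 : P * Q = 1) (hQ2 : Q * P = 1)
    (hPD : ∀ v : Fin n → ℍ[ℝ], v ≠ 0 → ∃ t : ℝ, 0 < t ∧
      ∑ i : Fin n, ∑ j : Fin n, star (v i) * P i j * v j = (t : ℍ[ℝ]))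
    (K : Ω → Ω → ℍ[ℝ]) (B : Ω → Fin n → ℍ[ℝ]) :
    QPosKernel (fun p q => Matrix.fromBlocks P
        (Matrix.of fun i (_ : Fin 1) => star (B q i))
        (Matrix.of fun (_ : Fin 1) j => B p j)
        (Matrix.of fun (_ : Fin 1) (_ : Fin 1) => K p q))
      ↔ QPosKernel (fun p q => Matrix.of fun (_ : Fin 1) (_ : Fin 1) =>
          K p q - ∑ i : Fin n, ∑ j : Fin n, B p i * Q i j * star (B q j)) := by
  have hQs : ∀ a k : Fin n, star (Q k a) = Q a k := by
    have h1 : Qᴴ * P = 1 := by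
      have h := congrArg Matrix.conjTranspose hQ1
      rwa [Matrix.conjTranspose_mul, Matrix.conjTranspose_one, hHerm] at h
    have hQH : Qᴴ = Q := by
      calc Qᴴ = Qᴴ * (P * Q) := by rw [hQ1, mul_one]
        _ = Qᴴ * P * Q := by rw [mul_assoc]
        _ = Q := by rw [h1, one_mul]
    intro a k
    have := congrFun (congrFun hQH a) k
    simpa [Matrix.conjTranspose_apply] using this
  have hPSD : ∀ v : Fin n → ℍ[ℝ], ∃ t : ℝ, 0 ≤ t ∧
      ∑ i : Fin n, ∑ j : Fin n, star (v i) * P i j * v j = (t : ℍ[ℝ]) := by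
    intro v
    by_cases hv : v = 0
    · exact ⟨0, le_refl _, by simp [hv]⟩
    · obtain ⟨t, ht, hsum⟩ := hPD v hv
      exact ⟨t, le_of_lt ht, hsum⟩
  constructor
  · intro h r q c
    set c' : Fin r → (Fin n ⊕ Fin 1) → ℍ[ℝ] := fun i =>
      Sum.elim (fun k => -(∑ a, Q k a * (star (B (q i) a) * c i 0))) (fun _ => c i 0)
      with hc'
    obtain ⟨t, ht, hsum⟩ := h r q c'
    refine ⟨t, ht, ?_⟩
    rw [key P Q hQ1 hQ2 hQs (fun i j => K (q i) (q j)) (fun i => B (q i)) c'] at hsum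
    have hzero : ∀ k : Fin n, ((∑ i, c' i (Sum.inl k))
        + ∑ a, Q k a * (∑ i, star (B (q i) a) * c' i (Sum.inr 0))) = 0 := by
      intro k
      simp only [hc', Sum.elim_inl, Sum.elim_inr]
      rw [Finset.sum_neg_distrib, neg_add_eq_zero, Finset.sum_comm]
      exact Finset.sum_congr rfl fun a _ => (Finset.mul_sum _ _ _).symm
    simp only [hzero, star_zero, zero_mul, mul_zero, Finset.sum_const_zero, zero_add] at hsum
    simpa [hc', Fin.sum_univ_one] using hsum
  · intro h r q c
    obtain ⟨t₂, ht₂, hS⟩ := h r q (fun i _ => c i (Sum.inr 0))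
    obtain ⟨t₁, ht₁, hW⟩ := hPSD (fun k => (∑ i, c i (Sum.inl k))
      + ∑ a, Q k a * (∑ i, star (B (q i) a) * c i (Sum.inr 0)))
    refine ⟨t₁ + t₂, add_nonneg ht₁ ht₂, ?_⟩
    have hgoal := key P Q hQ1 hQ2 hQs (fun i j => K (q i) (q j)) (fun i => B (q i)) c
    simp only [Fin.sum_univ_one, Matrix.of_apply] at hS
    rw [hgoal, hW, hS]
    norm_cast
end

section
/- In the quaternionic Hardy space H²(B) with reproducing kernel k(p,q) = Σₙ pⁿ conj(q)ⁿ, a finite collection {k(·,qᵢ)}_{i=1}^{m} based on distinct points q₁,...,q_m ∈ B is right-linearly independent over ℍ if and only if no three of the points q₁,...,q_m lie on the same 2-sphere (conjugacy class). -/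
/-!
Expanding the kernel gives `∑ᵢ k(p, qᵢ) αᵢ = ∑ₙ pⁿ (∑ᵢ sᵢⁿ αᵢ)` with `sᵢ = conj qᵢ`, so by
uniqueness of power series coefficients (along real `p`) the combination vanishes on `B` iff all
moments `∑ᵢ sᵢⁿ αᵢ` vanish, i.e. iff `∑ᵢ P(sᵢ) αᵢ = 0` for every real polynomial `P`.
The 2-sphere of `x` is the zero set in `ℍ` of the real quadratic `Δₓ = X² - 2 Re(x) X + |x|²`, and
on it every real polynomial acts as `y ↦ a + b y` with `a, b` real and independent of `y`.
Three points on one sphere therefore only impose the two conditions `∑ αᵢ = 0`, `∑ sᵢ αᵢ = 0`,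
which have a nonzero solution. Conversely, multiplying `P` by the product of the `Δ` of the other
spheres isolates the sphere of a given `sᵢ`; it holds at most one further point, and `P = 1, X`
then force `αᵢ = 0`.
-/

open Quaternion Polynomial Filter Topology

theorem eq_zero_of_tsum_pow_smul_eq_zero {𝕜 E : Type*} [NontriviallyNormedField 𝕜]
    [NormedAddCommGroup E] [NormedSpace 𝕜 E] [CompleteSpace E] {β : ℕ → E} {C : ℝ}
    (hC : ∀ n, ‖β n‖ ≤ C) (h : ∀ᶠ t in 𝓝 (0 : 𝕜), ∑' n, t ^ n • β n = 0) : β = 0 := by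
  let p : FormalMultilinearSeries 𝕜 𝕜 E := fun n ↦ ContinuousMultilinearMap.mkPiRing 𝕜 (Fin n) (β n)
  have hp : 0 < p.radius := zero_lt_one.trans_le <| p.le_radius_of_bound (r := 1) C fun n ↦ by
    simpa [p, ContinuousMultilinearMap.norm_mkPiRing] using hC n
  have hsum : p.sum =ᶠ[𝓝 0] 0 :=
    h.mono fun t ht ↦ by simpa [FormalMultilinearSeries.sum, p] using ht
  have hzero : p = 0 := ((p.hasFPowerSeriesOnBall hp).hasFPowerSeriesAt.congr hsum).eq_zero
  funext n
  simpa [p] using congrArg (fun p : FormalMultilinearSeries 𝕜 𝕜 E ↦ p n fun _ ↦ 1) hzero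

theorem sum_tsum_pow_mul_pow_mul {R ι : Type*} [NormedRing R] [NormOneClass R] [CompleteSpace R]
    [Fintype ι] {p : R} (hp : ‖p‖ < 1) {s : ι → R} (hs : ∀ i, ‖s i‖ ≤ 1) (α : ι → R) :
    ∑ i, (∑' n : ℕ, p ^ n * s i ^ n) * α i = ∑' n : ℕ, p ^ n * ∑ i, s i ^ n * α i := by
  have hsummable (i : ι) : Summable fun n : ℕ ↦ p ^ n * s i ^ n :=
    .of_norm_bounded (summable_geometric_of_lt_one (norm_nonneg p) hp) fun n ↦
      calc ‖p ^ n * s i ^ n‖ ≤ ‖p‖ ^ n * ‖s i‖ ^ n :=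
            (norm_mul_le _ _).trans (mul_le_mul (norm_pow_le p n) (norm_pow_le _ n)
              (norm_nonneg _) (by positivity))
        _ ≤ ‖p‖ ^ n := mul_le_of_le_one_right (by positivity) (pow_le_one₀ (norm_nonneg _) (hs i))
  calc ∑ i, (∑' n : ℕ, p ^ n * s i ^ n) * α i = ∑ i, ∑' n : ℕ, p ^ n * s i ^ n * α i :=
        Finset.sum_congr rfl fun i _ ↦ ((hsummable i).tsum_mul_right (α i)).symm
    _ = ∑' n : ℕ, ∑ i, p ^ n * s i ^ n * α i :=
        (Summable.tsum_finsetSum fun i _ ↦ (hsummable i).mul_right (α i)).symm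
    _ = ∑' n : ℕ, p ^ n * ∑ i, s i ^ n * α i := by simp only [Finset.mul_sum, mul_assoc]

theorem forall_sum_tsum_pow_mul_pow_mul_eq_zero_iff {R ι : Type*} [NormedRing R]
    [NormedAlgebra ℝ R] [NormOneClass R] [CompleteSpace R] [Fintype ι] {s : ι → R}
    (hs : ∀ i, ‖s i‖ ≤ 1) (α : ι → R) :
    (∀ p : R, ‖p‖ < 1 → ∑ i, (∑' n : ℕ, p ^ n * s i ^ n) * α i = 0) ↔
      ∀ n : ℕ, ∑ i, s i ^ n * α i = 0 := by
  refine ⟨fun h ↦ congrFun (eq_zero_of_tsum_pow_smul_eq_zero (𝕜 := ℝ) (C := ∑ i, ‖α i‖)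
    (fun n ↦ ?_) ?_), fun h p hp ↦ by simp [sum_tsum_pow_mul_pow_mul hp hs, h]⟩
  · refine (norm_sum_le _ _).trans (Finset.sum_le_sum fun i _ ↦ ?_)
    exact (norm_mul_le _ _).trans <| mul_le_of_le_one_left (norm_nonneg _) <|
      (norm_pow_le _ n).trans (pow_le_one₀ (norm_nonneg _) (hs i))
  · filter_upwards [Metric.ball_mem_nhds (0 : ℝ) one_pos] with t ht
    have hpt : ‖algebraMap ℝ R t‖ < 1 := by simpa using ht
    simpa [← sum_tsum_pow_mul_pow_mul hpt hs, Algebra.smul_def] using h _ hpt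

def PowersRightIndependent {A ι : Type*} [Ring A] [Fintype ι] (s : ι → A) : Prop :=
  ∀ α : ι → A, (∀ n : ℕ, ∑ i, s i ^ n * α i = 0) → α = 0

theorem sum_aeval_mul_eq_zero {R A ι : Type*} [CommRing R] [Ring A] [Algebra R A] [Fintype ι]
    {s : ι → A} {α : ι → A} (h : ∀ n : ℕ, ∑ i, s i ^ n * α i = 0) (P : R[X]) :
    ∑ i, aeval (s i) P * α i = 0 := by
  induction P using Polynomial.induction_on' with
  | add P Q hP hQ => simp [add_mul, Finset.sum_add_distrib, hP, hQ]
  | monomial n a => simp [aeval_monomial, mul_assoc, ← Finset.mul_sum, h n]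

theorem exists_pow_eq_of_aeval_eq_zero {R A : Type*} [CommRing R] [Ring A] [Algebra R A]
    {P : R[X]} (hP : P.Monic) (hdeg : P.natDegree = 2) (n : ℕ) :
    ∃ a b : R, ∀ y : A, aeval y P = 0 → y ^ n = algebraMap R A a + b • y := by
  have hrem : (X ^ n %ₘ P).natDegree ≤ 1 := by
    have := natDegree_modByMonic_lt (X ^ n) hP (by rintro rfl; simp at hdeg)
    omega
  refine ⟨(X ^ n %ₘ P).coeff 0, (X ^ n %ₘ P).coeff 1, fun y hy ↦ ?_⟩
  rw [← aeval_X_pow (R := R), ← aeval_modByMonic_eq_self_of_root hy,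
    eq_X_add_C_of_natDegree_le_one hrem]
  simp [Algebra.smul_def, add_comm]

theorem not_powersRightIndependent_of_aeval_eq_zero {R A ι : Type*} [CommRing R] [DivisionRing A]
    [Algebra R A] [Fintype ι] {P : R[X]} (hP : P.Monic) (hdeg : P.natDegree = 2) {s : ι → A}
    {i j k : ι} (hij : i ≠ j) (hjk : j ≠ k) (hik : s i ≠ s k) (hi : aeval (s i) P = 0)
    (hj : aeval (s j) P = 0) (hk : aeval (s k) P = 0) : ¬ PowersRightIndependent s := by
  classical
  set c := (s i - s k)⁻¹ * (s k - s j)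
  have hc : (s i - s k) * c = s k - s j := by
    rw [← mul_assoc, mul_inv_cancel₀ (sub_ne_zero.2 hik), one_mul]
  let α : ι → A := Pi.single i c + Pi.single j 1 + Pi.single k (-c - 1)
  have hsum (f : ι → A) : ∑ l, f l * α l = f i * c + f j + f k * (-c - 1) := by
    simp [α, mul_add, Finset.sum_add_distrib, Pi.single_apply]
  intro hind
  have hmoments (n : ℕ) : ∑ l, s l ^ n * α l = 0 := by
    obtain ⟨a, b, hab⟩ := exists_pow_eq_of_aeval_eq_zero (A := A) hP hdeg n
    rw [hsum, hab _ hi, hab _ hj, hab _ hk, Algebra.smul_def, Algebra.smul_def, Algebra.smul_def]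
    calc _ = algebraMap R A b * ((s i - s k) * c + s j - s k) := by noncomm_ring
      _ = 0 := by rw [hc]; noncomm_ring
  simpa [α, hij.symm, hjk] using congrFun (hind α hmoments) j

theorem eq_zero_of_sum_eq_zero_of_sum_mul_eq_zero {A ι : Type*} [DivisionRing A] [Fintype ι]
    {s : ι → A} (hs : Function.Injective s) {β : ι → A} {i j : ι}
    (hβ : ∀ l, l ≠ i → l ≠ j → β l = 0) (h0 : ∑ l, β l = 0) (h1 : ∑ l, s l * β l = 0) :
    β i = 0 := by
  rcases eq_or_ne i j with rfl | hij
  · rwa [Finset.sum_eq_single i (fun l _ hl ↦ hβ l hl hl) (by simp)] at h0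
  have hshift : ∑ l, (s l - s j) * β l = 0 := by
    simp [sub_mul, Finset.sum_sub_distrib, ← Finset.mul_sum, h0, h1]
  rw [Finset.sum_eq_single i (fun l _ hli ↦ ?_) (by simp)] at hshift
  · exact (mul_eq_zero.1 hshift).resolve_left (sub_ne_zero.2 (hs.ne hij))
  · rcases eq_or_ne l j with rfl | hlj
    · simp
    · simp [hβ l hli hlj]

noncomputable def sphereCharpoly (x : ℍ[ℝ]) : ℝ[X] := X ^ 2 - C (2 * x.re) * X + C (normSq x)

theorem sphereCharpoly_monic (x : ℍ[ℝ]) : (sphereCharpoly x).Monic := by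
  unfold sphereCharpoly; monicity!

theorem natDegree_sphereCharpoly (x : ℍ[ℝ]) : (sphereCharpoly x).natDegree = 2 := by
  unfold sphereCharpoly; compute_degree!

theorem aeval_sphereCharpoly (x y : ℍ[ℝ]) :
    aeval y (sphereCharpoly x) = y ^ 2 - (2 * x.re) • y + ((normSq x : ℝ) : ℍ[ℝ]) := by
  simp [sphereCharpoly, Algebra.smul_def]

theorem aeval_sphereCharpoly_self (x : ℍ[ℝ]) : aeval x (sphereCharpoly x) = 0 := by
  have htrace : (2 * x.re) • x = (x + star x) * x := by
    rw [self_add_star, ← coe_mul_eq_smul]; push_cast; rfl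
  rw [aeval_sphereCharpoly, htrace, ← star_mul_self]
  noncomm_ring

theorem sphereCharpoly_eq_of_aeval_eq_zero {x y : ℍ[ℝ]} (h : aeval y (sphereCharpoly x) = 0) :
    sphereCharpoly y = sphereCharpoly x := by
  rw [aeval_sphereCharpoly] at h
  obtain ⟨hre, hI, hJ, hK⟩ := QuaternionAlgebra.ext_iff.1 h
  simp only [sq, normSq_def', re_add, re_sub, re_mul, re_smul, re_coe, imI_add, imI_sub, imI_mul,
    imI_smul, imI_coe, imJ_add, imJ_sub, imJ_mul, imJ_smul, imJ_coe, imK_add, imK_sub, imK_mul,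
    imK_smul, imK_coe, re_zero, imI_zero, imJ_zero, imK_zero, smul_eq_mul] at hre hI hJ hK
  have hre_eq : y.re = x.re := by
    by_contra hne
    have hd : y.re - x.re ≠ 0 := sub_ne_zero.2 hne
    have hvanish (v : ℝ) (hv : (y.re - x.re) * v = 0) : v = 0 := (mul_eq_zero.1 hv).resolve_left hd
    rw [hvanish y.imI (by linarith), hvanish y.imJ (by linarith), hvanish y.imK (by linarith)]
      at hre
    nlinarith [sq_pos_of_ne_zero hd, sq_nonneg x.imI, sq_nonneg x.imJ, sq_nonneg x.imK]
  have hnormSq : normSq y = normSq x := by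
    rw [hre_eq] at hre
    rw [normSq_def', normSq_def', hre_eq]
    linarith
  rw [sphereCharpoly, sphereCharpoly, hre_eq, hnormSq]

theorem normSq_eq_re_sq_add_norm_im_sq (x : ℍ[ℝ]) : normSq x = x.re ^ 2 + ‖x.im‖ ^ 2 := by
  rw [sq ‖x.im‖, ← normSq_eq_norm_mul_self, normSq_def', normSq_def']
  simp [add_assoc]

theorem sphereCharpoly_eq_iff {x y : ℍ[ℝ]} :
    sphereCharpoly x = sphereCharpoly y ↔ x.re = y.re ∧ ‖x.im‖ = ‖y.im‖ := by
  constructor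
  · intro h
    have hre : x.re = y.re := by
      simpa [sphereCharpoly, coeff_X, coeff_C] using congrArg (coeff · 1) h
    have hnormSq : normSq x = normSq y := by
      simpa [sphereCharpoly, coeff_X, coeff_C] using congrArg (coeff · 0) h
    rw [normSq_eq_re_sq_add_norm_im_sq, normSq_eq_re_sq_add_norm_im_sq, hre, add_right_inj]
      at hnormSq
    exact ⟨hre, (pow_left_inj₀ (norm_nonneg _) (norm_nonneg _) two_ne_zero).1 hnormSq⟩
  · rintro ⟨hre, him⟩
    rw [sphereCharpoly, sphereCharpoly, normSq_eq_re_sq_add_norm_im_sq x,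
      normSq_eq_re_sq_add_norm_im_sq y, hre, him]

theorem sphereCharpoly_star (x : ℍ[ℝ]) : sphereCharpoly (star x) = sphereCharpoly x := by
  rw [sphereCharpoly, re_star, normSq_star, sphereCharpoly]

theorem powersRightIndependent_of_not_exists_three {ι : Type*} [Fintype ι] {s : ι → ℍ[ℝ]}
    (hs : Function.Injective s)
    (h : ¬∃ i j k, i ≠ j ∧ j ≠ k ∧ i ≠ k ∧
      sphereCharpoly (s i) = sphereCharpoly (s j) ∧ sphereCharpoly (s i) = sphereCharpoly (s k)) :
    PowersRightIndependent s := by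
  classical
  intro α hα
  funext i₀
  obtain ⟨j₁, hj₁⟩ : ∃ j₁, ∀ l, sphereCharpoly (s l) = sphereCharpoly (s i₀) → l = i₀ ∨ l = j₁ := by
    by_contra! hcon
    obtain ⟨j, hj, hji₀, -⟩ := hcon i₀
    obtain ⟨k, hk, hki₀, hkj⟩ := hcon j
    exact h ⟨i₀, j, k, hji₀.symm, hkj.symm, hki₀.symm, hj.symm, hk.symm⟩
  let Q : ℝ[X] :=
    ∏ j ∈ Finset.univ.filter (fun j ↦ sphereCharpoly (s j) ≠ sphereCharpoly (s i₀)),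
      sphereCharpoly (s j)
  have hQ_off (l : ι) (hl : sphereCharpoly (s l) ≠ sphereCharpoly (s i₀)) : aeval (s l) Q = 0 := by
    have hmem : l ∈ Finset.univ.filter fun j ↦ sphereCharpoly (s j) ≠ sphereCharpoly (s i₀) := by
      simpa using hl
    rw [show Q = _ from (Finset.mul_prod_erase _ _ hmem).symm, map_mul,
      aeval_sphereCharpoly_self, zero_mul]
  have hQ_i₀ : aeval (s i₀) Q ≠ 0 := by
    refine Finset.prod_induction _ (fun P ↦ aeval (s i₀) P ≠ 0)
      (fun P R hP hR ↦ by rw [map_mul]; exact mul_ne_zero hP hR) (by simp) fun j hj h0 ↦ ?_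
    exact (Finset.mem_filter.1 hj).2 (sphereCharpoly_eq_of_aeval_eq_zero h0).symm
  have hmul (P : ℝ[X]) : ∑ l, aeval (s l) P * (aeval (s l) Q * α l) = 0 := by
    simpa [mul_assoc] using sum_aeval_mul_eq_zero hα (P * Q)
  have hβ : aeval (s i₀) Q * α i₀ = 0 := by
    refine eq_zero_of_sum_eq_zero_of_sum_mul_eq_zero hs (β := fun l ↦ aeval (s l) Q * α l)
      (j := j₁) (fun l hli₀ hlj₁ ↦ ?_) (by simpa using hmul 1) (by simpa using hmul X)
    rw [hQ_off l fun hl ↦ (hj₁ l hl).elim hli₀ hlj₁, zero_mul]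
  exact (mul_eq_zero.1 hβ).resolve_left hQ_i₀

theorem powersRightIndependent_iff {ι : Type*} [Fintype ι] {s : ι → ℍ[ℝ]}
    (hs : Function.Injective s) :
    PowersRightIndependent s ↔
      ¬∃ i j k, i ≠ j ∧ j ≠ k ∧ i ≠ k ∧
        sphereCharpoly (s i) = sphereCharpoly (s j) ∧
          sphereCharpoly (s i) = sphereCharpoly (s k) := by
  refine ⟨?_, powersRightIndependent_of_not_exists_three hs⟩
  rintro hind ⟨i, j, k, hij, hjk, hik, hj, hk⟩
  have hroot {l : ι} (hl : sphereCharpoly (s i) = sphereCharpoly (s l)) :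
      aeval (s l) (sphereCharpoly (s i)) = 0 := by
    rw [hl]; exact aeval_sphereCharpoly_self _
  exact not_powersRightIndependent_of_aeval_eq_zero (sphereCharpoly_monic (s i))
    (natDegree_sphereCharpoly _) hij hjk (hs.ne hik) (hroot rfl) (hroot hj) (hroot hk) hind

theorem kernel_functions_right_independent_iff (m : ℕ) (q : Fin m → ℍ[ℝ])
    (hq : ∀ i, ‖q i‖ < 1) (hdist : Function.Injective q) :
    (∀ α : Fin m → ℍ[ℝ],
        (∀ p : ℍ[ℝ], ‖p‖ < 1 →
          ∑ i : Fin m, (∑' n : ℕ, p ^ n * (star (q i)) ^ n) * α i = 0) → α = 0)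
      ↔ ¬ ∃ i j k : Fin m, i ≠ j ∧ j ≠ k ∧ i ≠ k ∧
          ((q i).re = (q j).re ∧ ‖(q i).im‖ = ‖(q j).im‖) ∧
          ((q i).re = (q k).re ∧ ‖(q i).im‖ = ‖(q k).im‖) := by
  have hstar_le (i : Fin m) : ‖star (q i)‖ ≤ 1 := (Quaternion.norm_star (q i)).trans_le (hq i).le
  simp only [forall_sum_tsum_pow_mul_pow_mul_eq_zero_iff hstar_le]
  rw [← PowersRightIndependent,
    powersRightIndependent_iff (s := fun i ↦ star (q i)) (star_injective.comp hdist)]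
  simp only [sphereCharpoly_star, sphereCharpoly_eq_iff]
end

section
/- Let S(p) = Σₖ pᵏ Sₖ be a quaternionic power series on the unit ball and let Sₙ be the (n+1)×(n+1) lower-triangular Toeplitz matrix with (i,j) entry S_{i-j} for i ≥ j and 0 otherwise. Then the left ⋆-multiplication operator M_S : f ↦ S ⋆ f is a contraction on the quaternionic Hardy space H²(B) if and only if Iₙ - Sₙ Sₙ* is positive semidefinite for every n ≥ 0. -/
open Quaternion Matrix

/-!
Multiplication by `S` is lower triangular: the first `n + 1` coefficients of `S ⋆ f` are
`Sₙ` applied to the first `n + 1` coefficients of `f`. Testing on finitely supported `f`, and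
conversely bounding partial sums, shows that `M_S` is a contraction iff every `Sₙ` is.
Finally `v* (I - Sₙ Sₙ*) v = ‖v‖² - ‖Sₙ* v‖²`, and by Cauchy–Schwarz a quaternionic matrix is
a contraction iff its conjugate transpose is.
-/

section QuaternionicMatrix

variable {m n : Type*} [Fintype m] [Fintype n]

lemma star_dotProduct_self (x : n → ℍ[ℝ]) :
    star x ⬝ᵥ x = ((∑ i, ‖x i‖ ^ 2 : ℝ) : ℍ[ℝ]) := by
  simp only [dotProduct, Pi.star_apply, star_mul_self, normSq_eq_norm_mul_self, ← sq,
    ← algebraMap_def, map_sum]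

lemma star_mulVec_conjTranspose_dotProduct (A : Matrix m n ℍ[ℝ]) (v : m → ℍ[ℝ])
    (x : n → ℍ[ℝ]) : star (Aᴴ *ᵥ v) ⬝ᵥ x = star v ⬝ᵥ (A *ᵥ x) := by
  rw [star_mulVec, conjTranspose_conjTranspose, dotProduct_mulVec]

lemma norm_star_dotProduct_sq_le (x y : n → ℍ[ℝ]) :
    ‖star x ⬝ᵥ y‖ ^ 2 ≤ (∑ i, ‖x i‖ ^ 2) * ∑ i, ‖y i‖ ^ 2 := by
  have h : ‖star x ⬝ᵥ y‖ ≤ ∑ i, ‖x i‖ * ‖y i‖ :=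
    (norm_sum_le _ _).trans_eq (by simp only [Pi.star_apply, norm_mul, norm_star])
  calc ‖star x ⬝ᵥ y‖ ^ 2 ≤ (∑ i, ‖x i‖ * ‖y i‖) ^ 2 := by gcongr
    _ ≤ _ := Finset.sum_mul_sq_le_sq_mul_sq _ _ _

lemma sum_norm_sq_conjTranspose_mulVec_le {A : Matrix m n ℍ[ℝ]}
    (hA : ∀ x, ∑ i, ‖(A *ᵥ x) i‖ ^ 2 ≤ ∑ j, ‖x j‖ ^ 2) (v : m → ℍ[ℝ]) :
    ∑ j, ‖(Aᴴ *ᵥ v) j‖ ^ 2 ≤ ∑ i, ‖v i‖ ^ 2 := by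
  have hw0 : 0 ≤ ∑ j, ‖(Aᴴ *ᵥ v) j‖ ^ 2 := Finset.sum_nonneg fun _ _ => sq_nonneg _
  have hw : ‖star v ⬝ᵥ (A *ᵥ (Aᴴ *ᵥ v))‖ = ∑ j, ‖(Aᴴ *ᵥ v) j‖ ^ 2 := by
    rw [← star_mulVec_conjTranspose_dotProduct, star_dotProduct_self, norm_coe,
      Real.norm_of_nonneg hw0]
  have hcs := norm_star_dotProduct_sq_le v (A *ᵥ (Aᴴ *ᵥ v))
  rw [hw] at hcs
  have hv : 0 ≤ ∑ i, ‖v i‖ ^ 2 := Finset.sum_nonneg fun _ _ => sq_nonneg _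
  -- `‖w‖⁴ = ‖⟨v, A w⟩‖² ≤ ‖v‖² ‖A w‖² ≤ ‖v‖² ‖w‖²` for `w = Aᴴ v`
  have := mul_le_mul_of_nonneg_left (hA (Aᴴ *ᵥ v)) hv
  nlinarith

lemma sum_sum_star_mul_mul_eq_star_dotProduct_mulVec (M : Matrix n n ℍ[ℝ]) (v : n → ℍ[ℝ]) :
    ∑ i, ∑ j, star (v i) * M i j * v j = star v ⬝ᵥ (M *ᵥ v) := by
  simp only [dotProduct, mulVec, Pi.star_apply, Finset.mul_sum, mul_assoc]

lemma star_dotProduct_one_sub_mul_conjTranspose_mulVec [DecidableEq m] (A : Matrix m n ℍ[ℝ])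
    (v : m → ℍ[ℝ]) : star v ⬝ᵥ ((1 - A * Aᴴ) *ᵥ v)
      = ((∑ i, ‖v i‖ ^ 2 - ∑ j, ‖(Aᴴ *ᵥ v) j‖ ^ 2 : ℝ) : ℍ[ℝ]) := by
  rw [sub_mulVec, one_mulVec, ← mulVec_mulVec, dotProduct_sub,
    ← star_mulVec_conjTranspose_dotProduct, star_dotProduct_self, star_dotProduct_self, coe_sub]

lemma one_sub_mul_conjTranspose_nonneg_iff [DecidableEq m] (A : Matrix m n ℍ[ℝ]) :
    (∀ v : m → ℍ[ℝ], ∃ t : ℝ, 0 ≤ t ∧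
        ∑ i, ∑ j, star (v i) * (((1 : Matrix m m ℍ[ℝ]) - A * Aᴴ) i j) * v j = (t : ℍ[ℝ]))
      ↔ ∀ x, ∑ i, ‖(A *ᵥ x) i‖ ^ 2 ≤ ∑ j, ‖x j‖ ^ 2 := by
  simp only [sum_sum_star_mul_mul_eq_star_dotProduct_mulVec,
    star_dotProduct_one_sub_mul_conjTranspose_mulVec, coe_inj, exists_eq_right', sub_nonneg]
  refine ⟨fun h x => ?_, fun h => sum_norm_sq_conjTranspose_mulVec_le h⟩
  simpa only [conjTranspose_conjTranspose] using sum_norm_sq_conjTranspose_mulVec_le h x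

end QuaternionicMatrix

noncomputable section Toeplitz

variable (S : ℕ → ℍ[ℝ])

def lowerToeplitz (n : ℕ) : Matrix (Fin (n + 1)) (Fin (n + 1)) ℍ[ℝ] :=
  of fun i j => if (j : ℕ) ≤ i then S (i - j) else 0

def starMul (f : ℕ → ℍ[ℝ]) (k : ℕ) : ℍ[ℝ] :=
  ∑ r ∈ Finset.range (k + 1), S r * f (k - r)

lemma lowerToeplitz_mulVec (f : ℕ → ℍ[ℝ]) {n : ℕ} (i : Fin (n + 1)) :
    (lowerToeplitz S n *ᵥ fun j => f j) i = starMul S f i := by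
  calc (lowerToeplitz S n *ᵥ fun j => f j) i
      = ∑ j ∈ Finset.range (n + 1), if j ≤ i then S (i - j) * f j else 0 := by
        simp only [lowerToeplitz, mulVec, dotProduct, of_apply, ite_mul, zero_mul]
        exact Fin.sum_univ_eq_sum_range (fun j => if j ≤ i then S (i - j) * f j else 0) _
    _ = ∑ j ∈ Finset.range (i + 1), S (i - j) * f j := by
        rw [← Finset.sum_filter]
        congr 1
        ext j
        simp only [Finset.mem_filter, Finset.mem_range]
        omega
    _ = starMul S f i := by
        rw [starMul, ← Finset.sum_range_reflect]
        refine Finset.sum_congr rfl fun j hj => ?_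
        rw [Finset.mem_range] at hj
        rw [Nat.add_sub_cancel, Nat.sub_sub_self (by omega)]

lemma sum_range_norm_sq_starMul (f : ℕ → ℍ[ℝ]) (n : ℕ) :
    ∑ k ∈ Finset.range (n + 1), ‖starMul S f k‖ ^ 2
      = ∑ i, ‖(lowerToeplitz S n *ᵥ fun j => f j) i‖ ^ 2 := by
  simp only [lowerToeplitz_mulVec]
  exact (Fin.sum_univ_eq_sum_range (fun k => ‖starMul S f k‖ ^ 2) _).symm

lemma lowerToeplitz_contraction_of_starMul_contraction
    (h : ∀ f : ℕ → ℍ[ℝ], Summable (fun k => ‖f k‖ ^ 2) →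
      Summable (fun k => ‖starMul S f k‖ ^ 2) ∧ ∑' k, ‖starMul S f k‖ ^ 2 ≤ ∑' k, ‖f k‖ ^ 2)
    (n : ℕ) (x : Fin (n + 1) → ℍ[ℝ]) :
    ∑ i, ‖(lowerToeplitz S n *ᵥ x) i‖ ^ 2 ≤ ∑ i, ‖x i‖ ^ 2 := by
  set f : ℕ → ℍ[ℝ] := fun k => if hk : k < n + 1 then x ⟨k, hk⟩ else 0
  have hfx : (fun j : Fin (n + 1) => f j) = x := funext fun j => dif_pos j.isLt
  have hf0 : ∀ k ∉ Finset.range (n + 1), ‖f k‖ ^ 2 = 0 := fun k hk => by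
    simp only [f, dif_neg (Finset.mem_range.not.mp hk), norm_zero, zero_pow two_ne_zero]
  obtain ⟨hsum, hle⟩ := h f (summable_of_ne_finset_zero hf0)
  calc ∑ i, ‖(lowerToeplitz S n *ᵥ x) i‖ ^ 2
      = ∑ k ∈ Finset.range (n + 1), ‖starMul S f k‖ ^ 2 := by
        rw [sum_range_norm_sq_starMul, hfx]
    _ ≤ ∑' k, ‖starMul S f k‖ ^ 2 := hsum.sum_le_tsum _ fun _ _ => sq_nonneg _
    _ ≤ ∑' k, ‖f k‖ ^ 2 := hle
    _ = ∑ i, ‖x i‖ ^ 2 := by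
        rw [tsum_eq_sum hf0, ← hfx]
        exact (Fin.sum_univ_eq_sum_range (fun k => ‖f k‖ ^ 2) _).symm

lemma starMul_contraction_of_lowerToeplitz_contraction
    (h : ∀ n (x : Fin (n + 1) → ℍ[ℝ]),
      ∑ i, ‖(lowerToeplitz S n *ᵥ x) i‖ ^ 2 ≤ ∑ i, ‖x i‖ ^ 2)
    (f : ℕ → ℍ[ℝ]) (hf : Summable fun k => ‖f k‖ ^ 2) :
    Summable (fun k => ‖starMul S f k‖ ^ 2) ∧ ∑' k, ‖starMul S f k‖ ^ 2 ≤ ∑' k, ‖f k‖ ^ 2 := by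
  have hpartial : ∀ N, ∑ k ∈ Finset.range N, ‖starMul S f k‖ ^ 2 ≤ ∑' k, ‖f k‖ ^ 2
    | 0 => by simpa using tsum_nonneg fun k => sq_nonneg ‖f k‖
    | n + 1 => calc
        ∑ k ∈ Finset.range (n + 1), ‖starMul S f k‖ ^ 2
          = ∑ i, ‖(lowerToeplitz S n *ᵥ fun j => f j) i‖ ^ 2 := sum_range_norm_sq_starMul S f n
        _ ≤ ∑ i : Fin (n + 1), ‖f i‖ ^ 2 := h n _
        _ = ∑ k ∈ Finset.range (n + 1), ‖f k‖ ^ 2 :=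
          Fin.sum_univ_eq_sum_range (fun k => ‖f k‖ ^ 2) _
        _ ≤ ∑' k, ‖f k‖ ^ 2 := hf.sum_le_tsum _ fun _ _ => sq_nonneg _
  have hsum := summable_of_sum_range_le (fun _ => sq_nonneg _) hpartial
  exact ⟨hsum, hsum.tsum_le_of_sum_range_le hpartial⟩

end Toeplitz

theorem multiplier_contraction_iff_toeplitz (S : ℕ → ℍ[ℝ]) :
    (∀ f : ℕ → ℍ[ℝ], (Summable fun k => ‖f k‖ ^ 2) →
        (Summable fun k => ‖∑ r ∈ Finset.range (k + 1), S r * f (k - r)‖ ^ 2) ∧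
        (∑' k : ℕ, ‖∑ r ∈ Finset.range (k + 1), S r * f (k - r)‖ ^ 2)
          ≤ ∑' k : ℕ, ‖f k‖ ^ 2)
      ↔ ∀ n : ℕ, ∀ v : Fin (n + 1) → ℍ[ℝ], ∃ t : ℝ, 0 ≤ t ∧
          ∑ i, ∑ j, star (v i) *
            (((1 : Matrix (Fin (n + 1)) (Fin (n + 1)) ℍ[ℝ])
              - (Matrix.of fun i j : Fin (n + 1) =>
                  if (j : ℕ) ≤ (i : ℕ) then S ((i : ℕ) - (j : ℕ)) else 0)
                * (Matrix.of fun i j : Fin (n + 1) =>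
                  if (j : ℕ) ≤ (i : ℕ) then S ((i : ℕ) - (j : ℕ)) else 0)ᴴ) i j)
            * v j = (t : ℍ[ℝ]) := by
  refine Iff.trans ?_ (forall_congr' fun n => one_sub_mul_conjTranspose_nonneg_iff
    (lowerToeplitz S n)).symm
  exact ⟨lowerToeplitz_contraction_of_starMul_contraction S,
    starMul_contraction_of_lowerToeplitz_contraction S⟩
end

section
/- Let Θ be the 2×2 quaternionic-matrix-valued function Θ(p) = I₂ + (p-1) Σₖ pᵏ [E*; N*] T*ᵏ P⁻¹ (Iₙ - T)⁻¹ [E, -N], where T = diag(p₁,...,pₙ) with |pᵢ|<1 and pᵢ ≠ 1, E the column of ones, N the column of sᵢ, and P the positive definite solution of P - TPT* = EE* - NN*. Then with J = diag(1,-1), the kernel Σₖ pᵏ (J - Θ(p) J Θ(q)*) conj(q)ᵏ equals (Σₖ pᵏ [E*;N*] T*ᵏ) P⁻¹ (Σₖ Tᵏ [E, N] conj(q)ᵏ) for all p, q in the unit ball, and in particular is a positive kernel. -/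
/-!
Write `F = A(x) P⁻¹ C(y)`. Because `J W* = [E*; N*]` and `W J W* = P - T P T*`, the recursion
`A(x) = [E*; N*] + x A(x) T*` together with `(Iₙ - T)⁻¹ (Iₙ - T) = Iₙ` turns `J - Θ(x) J Θ(y)*`
into `F - x F ȳ` by noncommutative algebra alone, and `Σₖ xᵏ (F - x F ȳ) ȳᵏ` telescopes to `F`.
Since `C(q) = A(q)*`, the kernel is `(P⁻¹ C(p))* P (P⁻¹ C(q))`, a Gram kernel of the positive
matrix `P`.
-/

open Quaternion Matrix

theorem hasSum_pow_mul_sub_mul_mul_pow {R : Type*} [NormedRing R] [NormOneClass R]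
    [CompleteSpace R] {x y : R} (hx : ‖x‖ < 1) (hy : ‖y‖ < 1) (F : R) :
    HasSum (fun k : ℕ => x ^ k * (F - x * F * y) * y ^ k) F := by
  set f : ℕ → R := fun k => x ^ k * F * y ^ k
  have hr : ‖x‖ * ‖y‖ < 1 := by nlinarith [norm_nonneg x, norm_nonneg y]
  have hf : Summable f := by
    refine .of_norm_bounded ((summable_geometric_of_lt_one (by positivity) hr).mul_left ‖F‖)
      fun k => ?_
    calc ‖f k‖ ≤ ‖x ^ k‖ * ‖F‖ * ‖y ^ k‖ := norm_mul₃_le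
      _ ≤ ‖x‖ ^ k * ‖F‖ * ‖y‖ ^ k := by gcongr <;> exact norm_pow_le _ _
      _ = ‖F‖ * (‖x‖ * ‖y‖) ^ k := by ring
  have hterm : ∀ k, x ^ k * (F - x * F * y) * y ^ k = f k - f (k + 1) := fun k => by
    simp only [f, pow_succ x, pow_succ' y]
    noncomm_ring
  have htele := hf.hasSum.sub ((hasSum_nat_add_iff' 1).2 hf.hasSum)
  rw [sub_sub_cancel, Finset.sum_range_one] at htele
  simpa only [hterm, f, pow_zero, one_mul, mul_one] using htele

theorem HasSum.matrix_mul_right {ι l m n α : Type*} [Fintype m] [NonUnitalNonAssocSemiring α]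
    [TopologicalSpace α] [IsTopologicalSemiring α] {f : ι → Matrix l m α} {S : Matrix l m α}
    (hf : HasSum f S) (B : Matrix m n α) : HasSum (fun k => f k * B) (S * B) :=
  Pi.hasSum.2 fun i => Pi.hasSum.2 fun j =>
    hasSum_sum fun l _ => ((Pi.hasSum.1 (Pi.hasSum.1 hf i) l)).mul_right (B l j)

theorem eq_add_smul_mul_of_hasSum_pow_smul {m n α : Type*} [Fintype n] [DecidableEq n] [Ring α]
    [TopologicalSpace α] [IsTopologicalRing α] [T2Space α] {x : α} {M S : Matrix m n α}
    {N : Matrix n n α} (h : HasSum (fun k : ℕ => x ^ k • (M * N ^ k)) S) :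
    S = M + x • (S * N) := by
  have hmul : HasSum (fun k : ℕ => x ^ (k + 1) • (M * N ^ (k + 1))) (x • (S * N)) := by
    simpa only [Matrix.smul_mul, smul_smul, ← pow_succ', Matrix.mul_assoc, ← pow_succ]
      using (h.matrix_mul_right N).const_smul x
  have htail := (hasSum_nat_add_iff' 1).2 h
  rw [Finset.sum_range_one, pow_zero, pow_zero, one_smul, Matrix.mul_one] at htail
  rw [hmul.unique htail]
  abel

theorem eq_conjTranspose_of_hasSum {m n α : Type*} [Fintype n] [DecidableEq n] [Ring α]
    [StarRing α] [TopologicalSpace α] [ContinuousStar α] [T2Space α] {x : α}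
    {M S : Matrix m n α} {N : Matrix n n α} {S' : Matrix n m α}
    (hS : ∀ i j, HasSum (fun k : ℕ => x ^ k * (M * N ^ k) i j) (S i j))
    (hS' : ∀ i j, HasSum (fun k : ℕ => (Nᴴ ^ k * Mᴴ) i j * star x ^ k) (S' i j)) :
    S' = Sᴴ := by
  ext i j
  refine (hS' i j).unique ?_
  have hterm : ∀ k : ℕ, star (x ^ k * (M * N ^ k) j i) = (Nᴴ ^ k * Mᴴ) i j * star x ^ k :=
    fun k => by rw [star_mul, star_pow, ← conjTranspose_apply, conjTranspose_mul,
      conjTranspose_pow]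
  simpa only [hterm, conjTranspose_apply] using (hS j i).star

theorem sub_one_add_mul_mul_one_add_mul_eq {S : Type*} [Ring S] {J G H X Y F u v : S}
    (hGJ : G * J = u - u * Y + F * Y) (hJH : J * H = v - X * v + X * F)
    (hGJH : G * J * H = v + u - F) :
    J - (1 + (X - 1) * G) * J * (1 + H * (Y - 1)) = F - X * F * Y := by
  have expand : (1 + (X - 1) * G) * J * (1 + H * (Y - 1))
      = J + (X - 1) * (G * J) + (J * H) * (Y - 1) + (X - 1) * (G * J * H) * (Y - 1) := by
    noncomm_ring
  rw [expand, hGJH, hGJ, hJH]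
  noncomm_ring

theorem sub_mul_mul_conjTranspose_eq_of_stein {m n α : Type*} [Fintype m] [DecidableEq m]
    [Fintype n] [DecidableEq n] [Ring α] [StarRing α] {J X Y : Matrix m m α} {M a b : Matrix m n α}
    {W : Matrix n m α} {T P Q R : Matrix n n α}
    (hWJ : W * J = Mᴴ) (hJW : J * Wᴴ = M) (hStein : W * M = P - T * P * Tᴴ)
    (hR : R * (1 - T) = 1) (hPQ : P * Q = 1) (hQP : Q * P = 1) (hQ : Qᴴ = Q)
    (ha : a = M + X * a * Tᴴ) (hb : b = M + Y * b * Tᴴ) :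
    J - (1 + (X - 1) * (a * Q * R * W)) * J * (1 + (Y - 1) * (b * Q * R * W))ᴴ
      = a * Q * bᴴ - X * (a * Q * bᴴ) * Yᴴ := by
  have hMa : M = a - X * a * Tᴴ := eq_sub_of_add_eq ha.symm
  have hMb : Mᴴ = bᴴ - T * bᴴ * Yᴴ := by
    rw [eq_sub_iff_add_eq, Matrix.mul_assoc]
    conv_rhs => rw [hb]
    simp only [conjTranspose_add, conjTranspose_mul, conjTranspose_conjTranspose]
  have hRT : R * T = R - 1 := by rw [← hR, Matrix.mul_sub, Matrix.mul_one, sub_sub_cancel]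
  have hTR : Tᴴ * Rᴴ = Rᴴ - 1 := by
    rw [← conjTranspose_mul, hRT, conjTranspose_sub, conjTranspose_one]
  have hmid : Q * R * (P - T * P * Tᴴ) * (Rᴴ * Q) = Rᴴ * Q + Q * R - Q :=
    calc Q * R * (P - T * P * Tᴴ) * (Rᴴ * Q)
        = Q * R * P * Rᴴ * Q - Q * (R * T) * P * (Tᴴ * Rᴴ) * Q := by noncomm_ring
      _ = Q * R * (P * Q) + (Q * P) * Rᴴ * Q - (Q * P) * Q := by rw [hRT, hTR]; noncomm_ring
      _ = Rᴴ * Q + Q * R - Q := by rw [hPQ, hQP]; noncomm_ring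
  have hΘb : (1 + (Y - 1) * (b * Q * R * W))ᴴ = 1 + Wᴴ * Rᴴ * Q * bᴴ * (Yᴴ - 1) := by
    simp only [conjTranspose_add, conjTranspose_mul, conjTranspose_sub, conjTranspose_one, hQ,
      Matrix.mul_assoc]
  rw [hΘb]
  apply sub_one_add_mul_mul_one_add_mul_eq (u := a * Q * R * bᴴ) (v := a * Rᴴ * Q * bᴴ)
  · calc a * Q * R * W * J = a * Q * R * (bᴴ - T * bᴴ * Yᴴ) := by
          rw [Matrix.mul_assoc _ W, hWJ, hMb]
      _ = a * Q * R * bᴴ - a * Q * (R * T) * bᴴ * Yᴴ := by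
          simp only [Matrix.mul_sub, Matrix.mul_assoc]
      _ = _ := by
          rw [hRT]
          simp only [Matrix.mul_sub, Matrix.sub_mul, Matrix.mul_one]
          abel
  · calc J * (Wᴴ * Rᴴ * Q * bᴴ) = (a - X * a * Tᴴ) * Rᴴ * Q * bᴴ := by
          simp only [← Matrix.mul_assoc J, hJW, ← hMa]
      _ = a * Rᴴ * Q * bᴴ - X * a * (Tᴴ * Rᴴ) * Q * bᴴ := by
          simp only [Matrix.sub_mul, Matrix.mul_assoc]
      _ = _ := by
          rw [hTR]
          simp only [Matrix.mul_sub, Matrix.sub_mul, Matrix.mul_one, Matrix.mul_assoc]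
          abel
  · calc a * Q * R * W * J * (Wᴴ * Rᴴ * Q * bᴴ)
        = a * (Q * R * (W * (J * Wᴴ)) * (Rᴴ * Q)) * bᴴ := by simp only [Matrix.mul_assoc]
      _ = a * (Rᴴ * Q + Q * R - Q) * bᴴ := by rw [hJW, hStein, hmid]
      _ = _ := by
          simp only [Matrix.mul_add, Matrix.add_mul, Matrix.mul_sub, Matrix.sub_mul,
            Matrix.mul_assoc]

section BlockMatrices

variable {n α : Type*} [Ring α] (s : n → α)

theorem conjTranspose_of_ite_one_star [StarRing α] :
    (of fun (i : Fin 2) j => if i = 0 then 1 else star (s j))ᴴ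
      = of fun i (j : Fin 2) => if j = 0 then 1 else s i := by
  ext i j
  fin_cases j <;> simp

theorem of_ite_one_neg_mul_diagonal_sign :
    (of fun i (j : Fin 2) => if j = 0 then 1 else -(s i))
        * diagonal (fun j : Fin 2 => if j = 0 then (1 : α) else -1)
      = of fun i j => if j = 0 then 1 else s i := by
  ext i j
  fin_cases j <;> simp

theorem diagonal_sign_mul_conjTranspose_of_ite_one_neg [StarRing α] :
    diagonal (fun j : Fin 2 => if j = 0 then (1 : α) else -1)
        * (of fun i (j : Fin 2) => if j = 0 then 1 else -(s i))ᴴ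
      = of fun i j => if i = 0 then 1 else star (s j) := by
  ext i j
  fin_cases i <;> simp

theorem of_ite_one_neg_mul_of_ite_one_star [Fintype n] [StarRing α] :
    (of fun i (j : Fin 2) => if j = 0 then 1 else -(s i))
        * (of fun (i : Fin 2) j => if i = 0 then 1 else star (s j))
      = of (fun (_ : n) (_ : n) => (1 : α)) - of fun i j => s i * star (s j) := by
  ext i j
  simp [mul_apply, Fin.sum_univ_two, sub_eq_add_neg]

end BlockMatrices

theorem sum_star_mul_conjTranspose_mul_mul {ι m n α : Type*} [Fintype ι] [Fintype m]
    [Fintype n] [Ring α] [StarRing α] (B : ι → Matrix n m α) (K : Matrix n n α)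
    (c : ι → m → α) :
    ∑ i, ∑ j, ∑ a, ∑ b, star (c i a) * ((B i)ᴴ * K * B j) a b * c j b
      = star (∑ i, B i *ᵥ c i) ⬝ᵥ (K *ᵥ ∑ i, B i *ᵥ c i) := by
  have hterm : ∀ i j, ∑ a, ∑ b, star (c i a) * ((B i)ᴴ * K * B j) a b * c j b
      = star (B i *ᵥ c i) ⬝ᵥ (K *ᵥ (B j *ᵥ c j)) := fun i j => by
    rw [star_mulVec, ← dotProduct_mulVec, mulVec_mulVec, mulVec_mulVec]
    simp only [dotProduct, mulVec, Pi.star_apply, Finset.mul_sum, mul_assoc]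
  simp only [hterm, star_sum, sum_dotProduct, mulVec_sum, dotProduct_sum]
  exact Finset.sum_comm

theorem exists_nonneg_sum_star_mul_conjTranspose_mul_mul {ι m n : Type*} [Fintype ι]
    [Fintype m] [Fintype n] [DecidableEq n] {P Q : Matrix n n ℍ[ℝ]} (hP : Pᴴ = P)
    (hPD : ∀ v : n → ℍ[ℝ], v ≠ 0 → ∃ t : ℝ, 0 < t ∧
      ∑ i, ∑ j, star (v i) * P i j * v j = (t : ℍ[ℝ]))
    (hPQ : P * Q = 1) (B : ι → Matrix n m ℍ[ℝ]) (c : ι → m → ℍ[ℝ]) :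
    ∃ t : ℝ, 0 ≤ t ∧ ∑ i, ∑ j, ∑ a, ∑ b, star (c i a) * ((B i)ᴴ * Q * B j) a b * c j b = t := by
  rw [sum_star_mul_conjTranspose_mul_mul]
  set u := ∑ i, B i *ᵥ c i
  set w := Q *ᵥ u
  have hu : u = P *ᵥ w := by rw [mulVec_mulVec, hPQ, one_mulVec]
  have hform : star u ⬝ᵥ w = ∑ i, ∑ j, star (w i) * P i j * w j := by
    rw [hu, star_mulVec, ← dotProduct_mulVec, hP]
    simp only [dotProduct, mulVec, Pi.star_apply, Finset.mul_sum, mul_assoc]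
  rw [hform]
  by_cases hw : w = 0
  · exact ⟨0, le_rfl, by simp [hw]⟩
  · obtain ⟨t, ht, hsum⟩ := hPD w hw
    exact ⟨t, ht.le, hsum⟩

theorem theta_kernel_identity_and_positivity_general (n : ℕ) (s : Fin n → ℍ[ℝ])
    (T : Matrix (Fin n) (Fin n) ℍ[ℝ])
    -- M = [E*; N*] : the 2×n matrix with rows Eᴴ and Nᴴ
    (M : Matrix (Fin 2) (Fin n) ℍ[ℝ])
    (hM : M = Matrix.of fun i j => if i = 0 then 1 else star (s j))
    -- W = [E, -N] and W₂ = [E, N] : n×2 matrices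
    (W W₂ : Matrix (Fin n) (Fin 2) ℍ[ℝ])
    (hW : W = Matrix.of fun i j => if j = 0 then 1 else -(s i))
    (hW₂ : W₂ = Matrix.of fun i j => if j = 0 then 1 else s i)
    -- P : positive definite Hermitian solution of the Stein equation
    (P : Matrix (Fin n) (Fin n) ℍ[ℝ]) (hHerm : Pᴴ = P)
    (hStein : P - T * P * Tᴴ
      = (Matrix.of fun (_ : Fin n) (_ : Fin n) => (1 : ℍ[ℝ]))
        - Matrix.of fun i j => s i * star (s j))
    (hPD : ∀ v : Fin n → ℍ[ℝ], v ≠ 0 → ∃ t : ℝ, 0 < t ∧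
      ∑ i : Fin n, ∑ j : Fin n, star (v i) * P i j * v j = (t : ℍ[ℝ]))
    -- Q = P⁻¹ and R = (Iₙ - T)⁻¹
    (Q : Matrix (Fin n) (Fin n) ℍ[ℝ]) (hQ1 : P * Q = 1) (hQ2 : Q * P = 1)
    (R : Matrix (Fin n) (Fin n) ℍ[ℝ]) (hR2 : R * (1 - T) = 1)
    -- Θ(p) = I₂ + (p-1) Σₖ pᵏ [E*;N*] T*ᵏ P⁻¹ (Iₙ-T)⁻¹ [E,-N], defined entrywise
    (Θ : ℍ[ℝ] → Matrix (Fin 2) (Fin 2) ℍ[ℝ])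
    (hΘ : ∀ x : ℍ[ℝ], ‖x‖ < 1 → ∀ i j : Fin 2,
      HasSum (fun k : ℕ => (x - 1) * x ^ k * (M * Tᴴ ^ k * Q * R * W) i j)
        (Θ x i j - (1 : Matrix (Fin 2) (Fin 2) ℍ[ℝ]) i j))
    -- A(p) = Σₖ pᵏ [E*;N*] T*ᵏ  and  C(q) = Σₖ Tᵏ [E,N] conj(q)ᵏ, entrywise
    (A : ℍ[ℝ] → Matrix (Fin 2) (Fin n) ℍ[ℝ])
    (hA : ∀ x : ℍ[ℝ], ‖x‖ < 1 → ∀ i j,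
      HasSum (fun k : ℕ => x ^ k * (M * Tᴴ ^ k) i j) (A x i j))
    (C : ℍ[ℝ] → Matrix (Fin n) (Fin 2) ℍ[ℝ])
    (hC : ∀ x : ℍ[ℝ], ‖x‖ < 1 → ∀ i j,
      HasSum (fun k : ℕ => (T ^ k * W₂) i j * (star x) ^ k) (C x i j))
    (J : Matrix (Fin 2) (Fin 2) ℍ[ℝ])
    (hJ : J = Matrix.diagonal fun i => if i = 0 then 1 else -1) :
    (∀ x y : ℍ[ℝ], ‖x‖ < 1 → ‖y‖ < 1 → ∀ i j : Fin 2,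
      HasSum (fun k : ℕ => x ^ k * ((J - Θ x * J * (Θ y)ᴴ) i j) * (star y) ^ k)
        ((A x * Q * C y) i j)) ∧
    ∀ (r : ℕ) (pts : Fin r → ℍ[ℝ]), (∀ l, ‖pts l‖ < 1) →
      ∀ c : Fin r → Fin 2 → ℍ[ℝ], ∃ t : ℝ, 0 ≤ t ∧
        ∑ i : Fin r, ∑ j : Fin r, ∑ a : Fin 2, ∑ b : Fin 2,
          star (c i a) * (A (pts i) * Q * C (pts j)) a b * c j b = (t : ℍ[ℝ]) := by
  have hMH : Mᴴ = W₂ := by rw [hM, hW₂, conjTranspose_of_ite_one_star]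
  have hWJ : W * J = Mᴴ := by rw [hMH, hW, hJ, hW₂, of_ite_one_neg_mul_diagonal_sign]
  have hJW : J * Wᴴ = M := by rw [hJ, hW, hM, diagonal_sign_mul_conjTranspose_of_ite_one_neg]
  have hWM : W * M = P - T * P * Tᴴ := by rw [hStein, hW, hM, of_ite_one_neg_mul_of_ite_one_star]
  have hQH : Qᴴ = Q :=
    left_inv_eq_right_inv (by rw [← hHerm, ← conjTranspose_mul, hQ1, conjTranspose_one]) hQ1
  have hAsum : ∀ z : ℍ[ℝ], ‖z‖ < 1 → HasSum (fun k : ℕ => z ^ k • (M * Tᴴ ^ k)) (A z) :=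
    fun z hz => Pi.hasSum.2 fun i => Pi.hasSum.2 (hA z hz i)
  have hArec : ∀ z : ℍ[ℝ], ‖z‖ < 1 → A z = M + diagonal (fun _ : Fin 2 => z) * A z * Tᴴ :=
    fun z hz => by
    simpa only [smul_eq_diagonal_mul, ← Matrix.mul_assoc]
      using eq_add_smul_mul_of_hasSum_pow_smul (hAsum z hz)
  have hCA : ∀ z : ℍ[ℝ], ‖z‖ < 1 → C z = (A z)ᴴ := fun z hz =>
    eq_conjTranspose_of_hasSum (hA z hz)
      (by simpa only [conjTranspose_conjTranspose, hMH] using hC z hz)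
  have hΘeq : ∀ z : ℍ[ℝ], ‖z‖ < 1 →
      Θ z = 1 + (diagonal (fun _ : Fin 2 => z) - 1) * (A z * Q * R * W) := fun z hz => by
    have hΘsum : HasSum (fun k : ℕ => ((z - 1) * z ^ k) • (M * Tᴴ ^ k * Q * R * W)) (Θ z - 1) :=
      Pi.hasSum.2 fun i => Pi.hasSum.2 (hΘ z hz i)
    have hsum := ((hAsum z hz).matrix_mul_right (Q * R * W)).const_smul (z - 1)
    simp only [Matrix.smul_mul, smul_smul, ← Matrix.mul_assoc] at hsum
    rw [eq_add_of_sub_eq' (hΘsum.unique hsum), sub_smul, one_smul, smul_eq_diagonal_mul,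
      Matrix.sub_mul, Matrix.one_mul]
  refine ⟨fun x y hx hy i j => ?_, fun r pts hpts c => ?_⟩
  · have hdefect := sub_mul_mul_conjTranspose_eq_of_stein hWJ hJW hWM hR2 hQ1 hQ2 hQH
      (hArec x hx) (hArec y hy)
    rw [← hΘeq x hx, ← hΘeq y hy, ← hCA y hy, diagonal_conjTranspose] at hdefect
    have hentry : (J - Θ x * J * (Θ y)ᴴ) i j
        = (A x * Q * C y) i j - x * (A x * Q * C y) i j * star y := by
      rw [hdefect, Matrix.sub_apply, mul_diagonal, diagonal_mul, Pi.star_apply]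
    rw [hentry]
    exact hasSum_pow_mul_sub_mul_mul_pow hx (by rwa [norm_star]) _
  · have hAC : ∀ l, A (pts l) = (C (pts l))ᴴ := fun l => by
      rw [hCA _ (hpts l), conjTranspose_conjTranspose]
    simpa only [hAC] using
      exists_nonneg_sum_star_mul_conjTranspose_mul_mul hHerm hPD hQ1 (fun l => C (pts l)) c

theorem theta_kernel_identity_and_positivity (n : ℕ) (p s : Fin n → ℍ[ℝ])
    (hp : ∀ i, ‖p i‖ < 1) (hp1 : ∀ i, p i ≠ 1)
    (T : Matrix (Fin n) (Fin n) ℍ[ℝ]) (hT : T = Matrix.diagonal p)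
    -- M = [E*; N*] : the 2×n matrix with rows Eᴴ and Nᴴ
    (M : Matrix (Fin 2) (Fin n) ℍ[ℝ])
    (hM : M = Matrix.of fun i j => if i = 0 then 1 else star (s j))
    -- W = [E, -N] and W₂ = [E, N] : n×2 matrices
    (W W₂ : Matrix (Fin n) (Fin 2) ℍ[ℝ])
    (hW : W = Matrix.of fun i j => if j = 0 then 1 else -(s i))
    (hW₂ : W₂ = Matrix.of fun i j => if j = 0 then 1 else s i)
    -- P : positive definite Hermitian solution of the Stein equation
    (P : Matrix (Fin n) (Fin n) ℍ[ℝ]) (hHerm : Pᴴ = P)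
    (hStein : P - T * P * Tᴴ
      = (Matrix.of fun (_ : Fin n) (_ : Fin n) => (1 : ℍ[ℝ]))
        - Matrix.of fun i j => s i * star (s j))
    (hPD : ∀ v : Fin n → ℍ[ℝ], v ≠ 0 → ∃ t : ℝ, 0 < t ∧
      ∑ i : Fin n, ∑ j : Fin n, star (v i) * P i j * v j = (t : ℍ[ℝ]))
    -- Q = P⁻¹ and R = (Iₙ - T)⁻¹
    (Q : Matrix (Fin n) (Fin n) ℍ[ℝ]) (hQ1 : P * Q = 1) (hQ2 : Q * P = 1)
    (R : Matrix (Fin n) (Fin n) ℍ[ℝ]) (hR1 : (1 - T) * R = 1) (hR2 : R * (1 - T) = 1)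
    -- Θ(p) = I₂ + (p-1) Σₖ pᵏ [E*;N*] T*ᵏ P⁻¹ (Iₙ-T)⁻¹ [E,-N], defined entrywise
    (Θ : ℍ[ℝ] → Matrix (Fin 2) (Fin 2) ℍ[ℝ])
    (hΘ : ∀ x : ℍ[ℝ], ‖x‖ < 1 → ∀ i j : Fin 2,
      HasSum (fun k : ℕ => (x - 1) * x ^ k * (M * Tᴴ ^ k * Q * R * W) i j)
        (Θ x i j - (1 : Matrix (Fin 2) (Fin 2) ℍ[ℝ]) i j))
    -- A(p) = Σₖ pᵏ [E*;N*] T*ᵏ  and  C(q) = Σₖ Tᵏ [E,N] conj(q)ᵏ, entrywise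
    (A : ℍ[ℝ] → Matrix (Fin 2) (Fin n) ℍ[ℝ])
    (hA : ∀ x : ℍ[ℝ], ‖x‖ < 1 → ∀ i j,
      HasSum (fun k : ℕ => x ^ k * (M * Tᴴ ^ k) i j) (A x i j))
    (C : ℍ[ℝ] → Matrix (Fin n) (Fin 2) ℍ[ℝ])
    (hC : ∀ x : ℍ[ℝ], ‖x‖ < 1 → ∀ i j,
      HasSum (fun k : ℕ => (T ^ k * W₂) i j * (star x) ^ k) (C x i j))
    (J : Matrix (Fin 2) (Fin 2) ℍ[ℝ])
    (hJ : J = Matrix.diagonal fun i => if i = 0 then 1 else -1) :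
    (∀ x y : ℍ[ℝ], ‖x‖ < 1 → ‖y‖ < 1 → ∀ i j : Fin 2,
      HasSum (fun k : ℕ => x ^ k * ((J - Θ x * J * (Θ y)ᴴ) i j) * (star y) ^ k)
        ((A x * Q * C y) i j)) ∧
    ∀ (r : ℕ) (pts : Fin r → ℍ[ℝ]), (∀ l, ‖pts l‖ < 1) →
      ∀ c : Fin r → Fin 2 → ℍ[ℝ], ∃ t : ℝ, 0 ≤ t ∧
        ∑ i : Fin r, ∑ j : Fin r, ∑ a : Fin 2, ∑ b : Fin 2,
          star (c i a) * (A (pts i) * Q * C (pts j)) a b * c j b = (t : ℍ[ℝ]) :=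
  theta_kernel_identity_and_positivity_general n s T M hM W W₂ hW hW₂ P hHerm hStein hPD Q hQ1 hQ2 R
    hR2 Θ hΘ A hA C hC J hJ
end
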